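/- arXiv:1303.5806 — 7 statements merged into one kernel-verified Lean document; each statement's English description precedes it below -/
import Mathlib

section
/- Suppose (a1,a2) is a positive imaginary root and p,q are positive integers. Then ⌊(q-1)·a2/a1⌋ ≤ a2 - p if and only if a1·p + a2·q < a1·a2 + a1 + a2. (The first condition expresses that, in the maximal Dyck path D^{a1×a2}, every horizontal edge of the extremal pair of size (q;p) precedes every vertical edge of that pair.) -/
/-- The quadratic form `Q(a1,a2) = c·a1² - bc·a1·a2 + b·a2²`. -/
def Qf (b c : ℕ) (a1 a2 : ℤ) : ℤ :=
  (c : ℤ) * a1 ^ 2 - (b : ℤ) * c * a1 * a2 + (b : ℤ) * a2 ^ 2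

/-- If `(a1,a2)` is a positive imaginary root and `p, q` are
positive integers, then `⌊(q-1)·a2/a1⌋ ≤ a2 - p` if and only if
`a1·p + a2·q < a1·a2 + a1 + a2`. -/
theorem statement5 (b c : ℕ) (hb : 0 < b) (hc : 0 < c)
    (a1 a2 : ℤ) (ha1 : 0 < a1) (ha2 : 0 < a2) (hroot : Qf b c a1 a2 ≤ 0)
    (p q : ℤ) (hp : 0 < p) (hq : 0 < q) :
    (q - 1) * a2 / a1 ≤ a2 - p ↔ a1 * p + a2 * q < a1 * a2 + a1 + a2 := by
  have key : (q - 1) * a2 / a1 ≤ a2 - p ↔ (q - 1) * a2 < (a2 - p + 1) * a1 := by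
    rw [← not_le, ← Int.le_ediv_iff_mul_le ha1]
    omega
  rw [key]
  constructor <;> intro h <;> nlinarith [h]
end

section
/- Assume (a1,a2) is a positive imaginary root. If (p,q) is a lattice point of P[a1,a2] with p > 0 and q > 0, then the extremal pair of size (q; p) in the maximal Dyck path D^{a1×a2} is compatible. -/
/-- The region `P` bounded by the broken line
`(0,0), (a',0), (a/B, a'/C), (0,a), (0,0)`, with the sides `[(0,0),(a',0)]` and
`[(0,a),(0,0)]` included and the rest of the boundary excluded.  (The simple
quadrilateral with these vertices is the union of the two triangles obtained by
cutting along its diagonal from `(0,0)` to `(a/B, a'/C)`; the excluded part of the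
boundary consists of the segments from `(a',0)` to `(a/B,a'/C)` and from
`(a/B,a'/C)` to `(0,a)`, minus the endpoints `(a',0)` and `(0,a)`.) -/
noncomputable def region (B C : ℕ) (a a' : ℤ) : Set (ℝ × ℝ) :=
  (convexHull ℝ ({(0, 0), ((a' : ℝ), 0), ((a : ℝ) / (B : ℝ), (a' : ℝ) / (C : ℝ))} : Set (ℝ × ℝ)) ∪
    convexHull ℝ ({(0, 0), ((a : ℝ) / (B : ℝ), (a' : ℝ) / (C : ℝ)), (0, (a : ℝ))} : Set (ℝ × ℝ))) \
  ((segment ℝ ((a' : ℝ), 0) ((a : ℝ) / (B : ℝ), (a' : ℝ) / (C : ℝ)) ∪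
    segment ℝ ((a : ℝ) / (B : ℝ), (a' : ℝ) / (C : ℝ)) (0, (a : ℝ))) \
   ({((a' : ℝ), 0), (0, (a : ℝ))} : Set (ℝ × ℝ)))

/-- Position (1-based) along the maximal Dyck path `D^{a1×a2}` of the `j`-th
horizontal edge `u_j` (`j = 1,…,a1`): it is preceded by `j-1` horizontal edges and
`⌊(j-1)·a2/a1⌋` vertical edges. -/
def hpos (a1 a2 j : ℕ) : ℕ := j + (j - 1) * a2 / a1

/-- Position (1-based) along the maximal Dyck path `D^{a1×a2}` of the `l`-th
vertical edge `v_l` (`l = 1,…,a2`): it is preceded by `l-1` vertical edges and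
`⌈l·a1/a2⌉` horizontal edges. -/
def vpos (a1 a2 l : ℕ) : ℕ := l + (l * a1 + a2 - 1) / a2

/-- Edge positions (1-based) of the subpath of the maximal Dyck path going from the
lattice point at position `s` to the lattice point at position `f` (lattice points
along the path have positions `0,…,n`, `n = a1+a2`; when `s ≥ f` the subpath wraps
around through the corner `(a1,a2) ≡ (0,0)`, and for `s = f` it is the whole path). -/
def subPos (n s f : ℕ) : Finset ℕ :=
  if s < f then Finset.Ioc s f else Finset.Icc 1 n \ Finset.Ioc f s

/-- Positions of the interior lattice points of the subpath from position `s` to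
position `f` (endpoints excluded; `(0,0)` and `(a1,a2)` are regarded as the same point). -/
def interiorPos (n s f : ℕ) : Finset ℕ :=
  if s < f then Finset.Ioo s f else Finset.Ioc s n ∪ Finset.Iio f

/-- The number of horizontal edges with index in `S` lying on the subpath of
`D^{a1×a2}` from position `s` to position `f`. -/
def horCount (a1 a2 : ℕ) (S : Finset ℕ) (s f : ℕ) : ℕ :=
  (S.filter fun j => hpos a1 a2 j ∈ subPos (a1 + a2) s f).card

/-- The number of vertical edges with index in `S` lying on the subpath of
`D^{a1×a2}` from position `s` to position `f`. -/
def vertCount (a1 a2 : ℕ) (S : Finset ℕ) (s f : ℕ) : ℕ :=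
  (S.filter fun l => vpos a1 a2 l ∈ subPos (a1 + a2) s f).card

/-- `(B,C)`-compatibility of a pair `(S1, S2)` of sets of horizontal edges
(indices `S1 ⊆ {1,…,a1}`) and vertical edges (indices `S2 ⊆ {1,…,a2}`) of the
maximal Dyck path `D^{a1×a2}`: for every `u ∈ S1` with left endpoint `E` and every
`v ∈ S2` with upper endpoint `F` there is a lattice point `A ∈ EF°` with
`|(AF)_1| = B·|(AF)_2 ∩ S2|` or `|(EA)_2| = C·|(EA)_1 ∩ S1|`. -/
def Compatible (B C a1 a2 : ℕ) (S1 S2 : Finset ℕ) : Prop :=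
  S1 ⊆ Finset.Icc 1 a1 ∧ S2 ⊆ Finset.Icc 1 a2 ∧
  ∀ j ∈ S1, ∀ l ∈ S2,
    ∃ t ∈ interiorPos (a1 + a2) (hpos a1 a2 j - 1) (vpos a1 a2 l),
      horCount a1 a2 (Finset.Icc 1 a1) t (vpos a1 a2 l)
          = B * vertCount a1 a2 S2 t (vpos a1 a2 l) ∨
      vertCount a1 a2 (Finset.Icc 1 a2) (hpos a1 a2 j - 1) t
          = C * horCount a1 a2 S1 (hpos a1 a2 j - 1) t

/-- The (finite) set of all `(B,C)`-compatible pairs in `D^{a1×a2}`. -/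
noncomputable def compatiblePairs (B C a1 a2 : ℕ) : Finset (Finset ℕ × Finset ℕ) :=
  @Finset.filter _ (fun S => Compatible B C a1 a2 S.1 S.2) (Classical.decPred _)
    ((Finset.Icc 1 a1).powerset ×ˢ (Finset.Icc 1 a2).powerset)

namespace St6

theorem lt_div_succ_mul (a b : ℕ) (hb : 0 < b) : a < (a/b + 1)*b := by
  have h1 := Nat.div_add_mod a b
  have h2 := Nat.mod_lt a hb
  have h3 : (a/b + 1)*b = b*(a/b) + b := by ring
  omega

theorem aux1 (X d t : ℕ) (hd : 0 < d) : 1 + X/d ≤ t ↔ X < t*d := by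
  constructor
  · intro h
    have h1 : (X/d + 1) * d ≤ t * d := Nat.mul_le_mul_right d (by omega)
    have h2 := lt_div_succ_mul X d hd
    omega
  · intro h
    have h1 : X/d * d ≤ X := Nat.div_mul_le_self X d
    have h2 : X/d * d < t * d := by omega
    have h3 : X/d < t := lt_of_mul_lt_mul_right h2 (Nat.zero_le d)
    omega

theorem aux2 (X d t : ℕ) (hd : 0 < d) : X/d ≤ t ↔ X < (t+1)*d := by
  rw [show (X/d ≤ t) ↔ (1 + X/d ≤ t+1) from by omega, aux1 X d (t+1) hd]

theorem nat_lt_div_iff (m k d : ℕ) (hd : 0 < d) : m < (k + d - 1) / d ↔ m * d < k := by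
  rw [Nat.lt_iff_add_one_le, Nat.le_div_iff_mul_le hd, add_mul, one_mul]
  omega

/-- number of horizontal edges among the first `t` edges of `D^{a1×a2}`. -/
def HD (a1 a2 t : ℕ) : ℕ := (t * a1 + (a1 + a2) - 1) / (a1 + a2)

/-- number of vertical edges among the first `t` edges. -/
def VD (a1 a2 t : ℕ) : ℕ := t * a2 / (a1 + a2)

theorem hpos_le_iff (a1 a2 j t : ℕ) (ha1 : 0 < a1) (hj : 1 ≤ j) :
    hpos a1 a2 j ≤ t ↔ j ≤ HD a1 a2 t := by
  have hn : 0 < a1 + a2 := by omega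
  have h1 : hpos a1 a2 j = 1 + (j-1)*(a1+a2)/a1 := by
    unfold hpos
    have e : (j-1)*(a1+a2) = (j-1)*a2 + (j-1)*a1 := by ring
    rw [e, Nat.add_mul_div_right _ _ ha1]
    omega
  rw [h1, aux1 _ _ _ ha1,
      show ((j-1)*(a1+a2) < t*a1) ↔ (j - 1 < HD a1 a2 t) from (nat_lt_div_iff _ _ _ hn).symm]
  omega

theorem vpos_le_iff (a1 a2 l t : ℕ) (ha1 : 0 < a1) (ha2 : 0 < a2) :
    vpos a1 a2 l ≤ t ↔ l ≤ VD a1 a2 t := by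
  have hn : 0 < a1 + a2 := by omega
  have h1 : vpos a1 a2 l = (l*(a1+a2) + a2 - 1)/a2 := by
    unfold vpos
    have e : l*(a1+a2) + a2 - 1 = (l*a1 + a2 - 1) + l*a2 := by
      have e2 : l*(a1+a2) = l*a1 + l*a2 := by ring
      omega
    rw [e, Nat.add_mul_div_right _ _ ha2]
    exact add_comm _ _
  have h2 : l*(a1+a2) + a2 - 1 < (t+1)*a2 ↔ l*(a1+a2) ≤ t*a2 := by
    have e : (t+1)*a2 = t*a2 + a2 := by ring
    omega
  rw [h1, aux2 _ _ _ ha2, h2, VD, ← Nat.le_div_iff_mul_le hn]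

theorem hpos_strict (a1 a2 j j' : ℕ) (h : j < j') : hpos a1 a2 j < hpos a1 a2 j' := by
  have h1 : (j-1)*a2/a1 ≤ (j'-1)*a2/a1 :=
    Nat.div_le_div_right (Nat.mul_le_mul_right a2 (by omega))
  show j + (j-1)*a2/a1 < j' + (j'-1)*a2/a1
  exact add_lt_add_of_lt_of_le h h1

theorem vpos_strict (a1 a2 l l' : ℕ) (h : l < l') : vpos a1 a2 l < vpos a1 a2 l' := by
  have h0 : l*a1 + a2 - 1 ≤ l'*a1 + a2 - 1 := by
    have := Nat.mul_le_mul_right a1 (le_of_lt h)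
    omega
  have h1 : (l*a1+a2-1)/a2 ≤ (l'*a1+a2-1)/a2 := Nat.div_le_div_right h0
  show l + (l*a1+a2-1)/a2 < l' + (l'*a1+a2-1)/a2
  exact add_lt_add_of_lt_of_le h h1

theorem card_filter_Icc_le {A B m : ℕ} (hA : 1 ≤ A) (P : ℕ → Prop) [DecidablePred P]
    (h : ∀ x, A ≤ x → x ≤ B → (P x ↔ x ≤ m)) :
    ((Finset.Icc A B).filter P).card = min B m + 1 - A := by
  have he : (Finset.Icc A B).filter P = Finset.Icc A (min B m) := by
    ext x
    simp only [Finset.mem_filter, Finset.mem_Icc]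
    constructor
    · rintro ⟨⟨h1, h2⟩, hp⟩
      have := (h x h1 h2).1 hp
      omega
    · rintro ⟨h1, h2⟩
      have hx2 : x ≤ B := by omega
      exact ⟨⟨h1, hx2⟩, (h x h1 hx2).2 (by omega)⟩
  rw [he, Nat.card_Icc]

theorem card_filter_Ioc (S : Finset ℕ) (g : ℕ → ℕ) {s f : ℕ} (hsf : s ≤ f) :
    (S.filter fun j => g j ∈ Finset.Ioc s f).card + (S.filter fun j => g j ≤ s).card
      = (S.filter fun j => g j ≤ f).card := by
  have hu : S.filter (fun j => g j ≤ f)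
      = (S.filter fun j => g j ∈ Finset.Ioc s f) ∪ (S.filter fun j => g j ≤ s) := by
    ext x
    simp only [Finset.mem_filter, Finset.mem_union, Finset.mem_Ioc]
    constructor
    · rintro ⟨hx, hle⟩
      rcases le_or_gt (g x) s with h' | h'
      · exact Or.inr ⟨hx, h'⟩
      · exact Or.inl ⟨hx, h', hle⟩
    · rintro (⟨hx, h1, h2⟩ | ⟨hx, h1⟩)
      · exact ⟨hx, h2⟩
      · exact ⟨hx, by omega⟩
  rw [hu, Finset.card_union_of_disjoint]
  simp only [Finset.disjoint_left, Finset.mem_filter, Finset.mem_Ioc]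
  rintro x ⟨_, h1, _⟩ ⟨_, h2⟩
  omega

theorem cntH (a1 a2 Q t : ℕ) (ha1 : 0 < a1) :
    ((Finset.Icc 1 Q).filter fun j => hpos a1 a2 j ≤ t).card = min Q (HD a1 a2 t) := by
  rw [card_filter_Icc_le le_rfl _ (fun x hx _ => hpos_le_iff a1 a2 x t ha1 hx)]
  omega

theorem cntV (a1 a2 A B t : ℕ) (hA : 1 ≤ A) (ha1 : 0 < a1) (ha2 : 0 < a2) :
    ((Finset.Icc A B).filter fun l => vpos a1 a2 l ≤ t).card
      = min B (VD a1 a2 t) + 1 - A :=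
  card_filter_Icc_le hA _ (fun x _ _ => vpos_le_iff a1 a2 x t ha1 ha2)

theorem HD_le (a1 a2 t : ℕ) (ha1 : 0 < a1) (ha2 : 0 < a2) (ht : t ≤ a1 + a2) :
    HD a1 a2 t ≤ a1 := by
  have hn : 0 < a1 + a2 := by omega
  have h0 : HD a1 a2 t ≤ a1 ↔ t * a1 + (a1+a2) - 1 < (a1+1)*(a1+a2) := by
    rw [show (HD a1 a2 t ≤ a1) ↔ ((t * a1 + (a1 + a2) - 1)/(a1+a2) ≤ a1) from Iff.rfl,
        aux2 _ _ _ hn]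
  rw [h0]
  have h1 : t * a1 ≤ (a1 + a2) * a1 := Nat.mul_le_mul_right a1 ht
  have h2 : (a1+1)*(a1+a2) = (a1+a2)*a1 + (a1+a2) := by ring
  omega

theorem VD_le (a1 a2 t : ℕ) (hn : 0 < a1 + a2) (ht : t ≤ a1 + a2) : VD a1 a2 t ≤ a2 := by
  unfold VD
  calc t * a2 / (a1+a2) ≤ (a1+a2) * a2 / (a1+a2) :=
        Nat.div_le_div_right (Nat.mul_le_mul_right a2 ht)
    _ = a2 := Nat.mul_div_cancel_left a2 hn

theorem HD_mono (a1 a2 : ℕ) {s t : ℕ} (h : s ≤ t) : HD a1 a2 s ≤ HD a1 a2 t :=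
  Nat.div_le_div_right (by have := Nat.mul_le_mul_right a1 h; omega)

theorem VD_mono (a1 a2 : ℕ) {s t : ℕ} (h : s ≤ t) : VD a1 a2 s ≤ VD a1 a2 t :=
  Nat.div_le_div_right (Nat.mul_le_mul_right a2 h)

theorem HD_step (a1 a2 t : ℕ) (hn : 0 < a1 + a2) : HD a1 a2 (t+1) ≤ HD a1 a2 t + 1 := by
  unfold HD
  have h1 : (t+1) * a1 + (a1 + a2) - 1 ≤ (t * a1 + (a1 + a2) - 1) + (a1+a2) := by
    have e : (t+1)*a1 = t*a1 + a1 := by ring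
    omega
  calc ((t+1) * a1 + (a1 + a2) - 1) / (a1+a2)
      ≤ ((t * a1 + (a1 + a2) - 1) + (a1+a2)) / (a1+a2) := Nat.div_le_div_right h1
    _ = (t * a1 + (a1 + a2) - 1) / (a1+a2) + 1 := Nat.add_div_right _ hn

theorem VD_step (a1 a2 t : ℕ) (hn : 0 < a1 + a2) : VD a1 a2 (t+1) ≤ VD a1 a2 t + 1 := by
  unfold VD
  have h1 : (t+1) * a2 ≤ t * a2 + (a1+a2) := by
    have e : (t+1)*a2 = t*a2 + a2 := by ring
    omega
  calc (t+1) * a2 / (a1+a2) ≤ (t * a2 + (a1+a2)) / (a1+a2) := Nat.div_le_div_right h1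
    _ = t * a2 / (a1+a2) + 1 := Nat.add_div_right _ hn

theorem HD_add_VD (a1 a2 t : ℕ) (ha1 : 0 < a1) (ha2 : 0 < a2) (ht : t ≤ a1 + a2) :
    HD a1 a2 t + VD a1 a2 t = t := by
  have hn : 0 < a1 + a2 := by omega
  set s := VD a1 a2 t with hs
  have h1 : s * (a1+a2) ≤ t * a2 := Nat.div_mul_le_self (t*a2) (a1+a2)
  have h2 : t * a2 < (s+1) * (a1+a2) := lt_div_succ_mul _ _ hn
  have e3 : (s+1)*(a1+a2) = s*(a1+a2) + (a1+a2) := by ring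
  have e4 : t*(a1+a2) = t*a1 + t*a2 := by ring
  have hst : s ≤ t := by
    by_contra h4
    push_neg at h4
    have h5 : (t+1) * (a1+a2) ≤ s * (a1+a2) := Nat.mul_le_mul_right _ (by omega)
    have e5 : (t+1)*(a1+a2) = t*(a1+a2) + (a1+a2) := by ring
    omega
  have e1 : (a1+a2)*(t-s) + (a1+a2)*s = (a1+a2)*t := by
    rw [← Nat.mul_add]
    congr 1
    omega
  have e2 : (a1+a2)*t = t*a1 + t*a2 := by ring
  have e6 : (a1+a2)*s = s*(a1+a2) := by ring
  have key : t * a1 + (a1 + a2) - 1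
      = (a1+a2)*(t-s) + ((a1+a2) - 1 - (t*a2 - s*(a1+a2))) := by
    omega
  have hHD : HD a1 a2 t = t - s := by
    unfold HD
    rw [key, Nat.mul_add_div hn, Nat.div_eq_of_lt (by omega)]
    omega
  omega

theorem tri_mem {X Y Z z : ℝ × ℝ} (h : z ∈ convexHull ℝ ({X, Y, Z} : Set (ℝ × ℝ))) :
    ∃ u v u' v' : ℝ, 0 ≤ u ∧ 0 ≤ v ∧ u + v = 1 ∧ 0 ≤ u' ∧ 0 ≤ v' ∧ u' + v' = 1 ∧
      u * X.1 + v * (u' * Y.1 + v' * Z.1) = z.1 ∧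
      u * X.2 + v * (u' * Y.2 + v' * Z.2) = z.2 ∧
      (u = 0 → z ∈ segment ℝ Y Z) := by
  rw [show ({X, Y, Z} : Set (ℝ × ℝ)) = insert X {Y, Z} from rfl,
      convexHull_insert ⟨Y, by simp⟩, convexHull_pair, mem_convexJoin] at h
  obtain ⟨x0, hx0, w, hw, hzw⟩ := h
  rw [Set.mem_singleton_iff] at hx0
  subst hx0
  obtain ⟨u, v, hu, hv, huv, heq⟩ := hzw
  obtain ⟨u', v', hu', hv', hu'v', heqw⟩ := hw
  refine ⟨u, v, u', v', hu, hv, huv, hu', hv', hu'v', ?_, ?_, ?_⟩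
  · have h1 := congrArg Prod.fst heq
    have h2 := congrArg Prod.fst heqw
    simp only [Prod.fst_add, Prod.smul_fst, smul_eq_mul] at h1 h2
    rw [← h2] at h1
    exact h1
  · have h1 := congrArg Prod.snd heq
    have h2 := congrArg Prod.snd heqw
    simp only [Prod.snd_add, Prod.smul_snd, smul_eq_mul] at h1 h2
    rw [← h2] at h1
    exact h1
  · intro hu0
    subst hu0
    have hv1 : v = 1 := by linarith
    subst hv1
    rw [zero_smul, one_smul, zero_add] at heq
    rw [← heq]
    exact ⟨u', v', hu', hv', hu'v', heqw⟩

set_option maxHeartbeats 2000000 in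
theorem region_extract (b c : ℕ) (hb : 0 < b) (hc : 0 < c)
    (a1 a2 : ℕ) (ha1 : 0 < a1) (ha2 : 0 < a2) (hroot : Qf b c a1 a2 ≤ 0)
    (p q : ℕ) (hp : 0 < p) (hq : 0 < q)
    (hP : ((p : ℝ), (q : ℝ)) ∈ region b c a1 a2) :
    p ≤ a2 ∧ q ≤ a1 ∧
      (((b:ℤ)*p ≤ a1 ∧ (c:ℤ)*a1*q + (b:ℤ)*p*((c:ℤ)*a1 - a2) < (c:ℤ)*a1^2) ∨
       ((c:ℤ)*q ≤ a2 ∧ (b:ℤ)*a2*p + (c:ℤ)*q*((b:ℤ)*a2 - a1) < (b:ℤ)*a2^2)) := by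
  have hZ : (c:ℤ)*a1^2 + b*a2^2 ≤ b*c*a1*a2 := by unfold Qf at hroot; linarith
  have hbR : (0:ℝ) < b := by exact_mod_cast hb
  have hcR : (0:ℝ) < c := by exact_mod_cast hc
  have ha1R : (0:ℝ) < a1 := by exact_mod_cast ha1
  have ha2R : (0:ℝ) < a2 := by exact_mod_cast ha2
  have hpR : (0:ℝ) < p := by exact_mod_cast hp
  have hqR : (0:ℝ) < q := by exact_mod_cast hq
  have hR : (c:ℝ)*a1^2 + b*a2^2 ≤ b*c*a1*a2 := by exact_mod_cast hZ
  have hA1B : (a1:ℝ) ≤ b*a2 := by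
    by_contra hcon
    push_neg at hcon
    nlinarith [mul_pos hcR ha1R, mul_pos (mul_pos hbR ha2R) ha2R]
  have hA2C : (a2:ℝ) ≤ c*a1 := by
    by_contra hcon
    push_neg at hcon
    nlinarith [mul_pos hbR ha2R, mul_pos (mul_pos hcR ha1R) ha1R]
  obtain ⟨hmem, hnotE⟩ := hP
  have hzne1 : ((p:ℝ), (q:ℝ)) ≠ ((((a2:ℤ)):ℝ), 0) := by
    intro h
    have := congrArg Prod.snd h
    simp only at this
    exact absurd this (by positivity)
  have hzne2 : ((p:ℝ), (q:ℝ)) ≠ (0, (((a1:ℤ)):ℝ)) := by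
    intro h
    have := congrArg Prod.fst h
    simp only at this
    exact absurd this (by positivity)
  have hseg : ((p:ℝ), (q:ℝ)) ∉
      (segment ℝ ((((a2:ℤ)):ℝ), 0) ((((a1:ℤ)):ℝ) / (b : ℝ), (((a2:ℤ)):ℝ) / (c : ℝ)) ∪
        segment ℝ ((((a1:ℤ)):ℝ) / (b : ℝ), (((a2:ℤ)):ℝ) / (c : ℝ)) (0, (((a1:ℤ)):ℝ))) := by
    intro hmem2
    exact hnotE ⟨hmem2, by
      simp only [Set.mem_insert_iff, Set.mem_singleton_iff]
      push_neg
      exact ⟨hzne1, hzne2⟩⟩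
  rcases hmem with h | h
  · obtain ⟨u, v, u', v', hu, hv, huv, hu', hv', hu'v', e1, e2, hseg0⟩ := tri_mem h
    simp only at e1 e2
    simp only [zero_add, add_zero, mul_zero, zero_mul] at e1 e2
    push_cast at e1 e2
    have hupos : 0 < u := by
      rcases eq_or_lt_of_le hu with h0 | h0
      · exact absurd (hseg0 h0.symm) (fun hs => hseg (Or.inl hs))
      · exact h0
    have hm1 : (a1:ℝ)/b ≤ a2 := by rw [div_le_iff₀ hbR]; nlinarith
    have hm2 : (a2:ℝ)/c ≤ a1 := by rw [div_le_iff₀ hcR]; nlinarith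
    have hcq : (c:ℝ)*q ≤ a2 := by
      have e3 : (c:ℝ)*q = v*v'*a2 := by
        rw [← e2]; field_simp
      have h4 : v*v' ≤ 1 := by
        calc v*v' ≤ 1*v' := mul_le_mul_of_nonneg_right (by linarith) hv'
          _ ≤ 1 := by linarith
      have h5 : v*v'*a2 ≤ 1*a2 := mul_le_mul_of_nonneg_right h4 ha2R.le
      linarith
    have hpa2 : (p:ℝ) ≤ a2 := by
      have e4 : v*(u'*(a2:ℝ) + v'*((a1:ℝ)/b)) = v*a2 - v*v'*((a2:ℝ) - (a1:ℝ)/b) := by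
        have : u' = 1 - v' := by linarith
        rw [this]; ring
      have t1 : 0 ≤ v*v'*((a2:ℝ) - (a1:ℝ)/b) := by
        apply mul_nonneg (mul_nonneg hv hv')
        linarith
      have h5 : v*a2 ≤ 1*a2 := mul_le_mul_of_nonneg_right (by linarith) ha2R.le
      linarith [e1, e4, t1, h5]
    have hell : (b:ℝ)*a2*p + c*q*((b:ℝ)*a2 - a1) - b*a2^2 = -u*((b:ℝ)*a2^2) := by
      rw [← e1, ← e2]
      have h1 : u = 1 - v := by linarith
      have h2 : u' = 1 - v' := by linarith
      rw [h1, h2]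
      field_simp
      ring
    have hstrict : (b:ℝ)*a2*p + c*q*((b:ℝ)*a2 - a1) < b*a2^2 := by
      have h7 : 0 < u*((b:ℝ)*a2^2) := mul_pos hupos (mul_pos hbR (pow_pos ha2R 2))
      linarith [hell, h7]
    have hqa1 : q ≤ a1 := by
      have h6 : (c:ℝ)*q ≤ c*a1 := by linarith
      have : (q:ℝ) ≤ a1 := le_of_mul_le_mul_left h6 hcR
      exact_mod_cast this
    refine ⟨by exact_mod_cast hpa2, hqa1, Or.inr ⟨?_, ?_⟩⟩
    · exact_mod_cast hcq
    · exact_mod_cast hstrict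
  · obtain ⟨u, v, u', v', hu, hv, huv, hu', hv', hu'v', e1, e2, hseg0⟩ := tri_mem h
    simp only at e1 e2
    simp only [zero_add, add_zero, mul_zero, zero_mul] at e1 e2
    push_cast at e1 e2
    have hupos : 0 < u := by
      rcases eq_or_lt_of_le hu with h0 | h0
      · exact absurd (hseg0 h0.symm) (fun hs => hseg (Or.inr hs))
      · exact h0
    have hm1 : (a1:ℝ)/b ≤ a2 := by rw [div_le_iff₀ hbR]; nlinarith
    have hm2 : (a2:ℝ)/c ≤ a1 := by rw [div_le_iff₀ hcR]; nlinarith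
    have hbp : (b:ℝ)*p ≤ a1 := by
      have e3 : (b:ℝ)*p = v*u'*a1 := by rw [← e1]; field_simp
      have h4 : v*u' ≤ 1 := by
        calc v*u' ≤ 1*u' := mul_le_mul_of_nonneg_right (by linarith) hu'
          _ ≤ 1 := by linarith
      have h5 : v*u'*a1 ≤ 1*a1 := mul_le_mul_of_nonneg_right h4 ha1R.le
      linarith
    have hqa1 : (q:ℝ) ≤ a1 := by
      have e4 : v*(u'*((a2:ℝ)/c) + v'*(a1:ℝ)) = v*a1 - v*u'*((a1:ℝ) - (a2:ℝ)/c) := by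
        have : v' = 1 - u' := by linarith
        rw [this]; ring
      have t1 : 0 ≤ v*u'*((a1:ℝ) - (a2:ℝ)/c) := by
        apply mul_nonneg (mul_nonneg hv hu')
        linarith
      have h5 : v*a1 ≤ 1*a1 := mul_le_mul_of_nonneg_right (by linarith) ha1R.le
      linarith [e2, e4, t1, h5]
    have hell : (c:ℝ)*a1*q + b*p*((c:ℝ)*a1 - a2) - c*a1^2 = -u*((c:ℝ)*a1^2) := by
      rw [← e1, ← e2]
      have h1 : u = 1 - v := by linarith
      have h2 : v' = 1 - u' := by linarith
      rw [h1, h2]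
      field_simp
      ring
    have hstrict : (c:ℝ)*a1*q + b*p*((c:ℝ)*a1 - a2) < c*a1^2 := by
      have h7 : 0 < u*((c:ℝ)*a1^2) := mul_pos hupos (mul_pos hcR (pow_pos ha1R 2))
      linarith [hell, h7]
    have hpa2 : p ≤ a2 := by
      have h6 : (b:ℝ)*p ≤ b*a2 := by linarith
      have : (p:ℝ) ≤ a2 := le_of_mul_le_mul_left h6 hbR
      exact_mod_cast this
    refine ⟨hpa2, by exact_mod_cast hqa1, Or.inl ⟨?_, ?_⟩⟩
    · exact_mod_cast hbp
    · exact_mod_cast hstrict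

end St6

set_option maxHeartbeats 4000000

/-- If `(a1,a2)` is a positive imaginary root and `(p,q)` is a
lattice point of `P[a1,a2]` with `p, q > 0`, then the extremal pair of size
`(q; p)` in `D^{a1×a2}` (the first `q` horizontal edges and the last `p` vertical
edges) is compatible. -/
theorem statement6 (b c : ℕ) (hb : 0 < b) (hc : 0 < c)
    (a1 a2 : ℕ) (ha1 : 0 < a1) (ha2 : 0 < a2) (hroot : Qf b c a1 a2 ≤ 0)
    (p q : ℕ) (hp : 0 < p) (hq : 0 < q)
    (hP : ((p : ℝ), (q : ℝ)) ∈ region b c a1 a2) :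
    Compatible b c a1 a2 (Finset.Icc 1 q) (Finset.Icc (a2 - p + 1) a2) := by
  obtain ⟨hpa2, hqa1, hPI⟩ := St6.region_extract b c hb hc a1 a2 ha1 ha2 hroot p q hp hq hP
  have hZ : (c:ℤ)*a1^2 + b*a2^2 ≤ b*c*a1*a2 := by unfold Qf at hroot; linarith
  have hbZ : (0:ℤ) < b := by exact_mod_cast hb
  have hcZ : (0:ℤ) < c := by exact_mod_cast hc
  have ha1Z : (0:ℤ) < a1 := by exact_mod_cast ha1
  have ha2Z : (0:ℤ) < a2 := by exact_mod_cast ha2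
  have hS5 : (0:ℤ) ≤ (b:ℤ)*c*a1*a2 - c*a1^2 - b*a2^2 := by linarith
  have hbaZ : (a1:ℤ) ≤ b*a2 := by
    by_contra hcon
    push_neg at hcon
    have h1 : (c:ℤ)*a1*(b*a2) < c*a1*a1 := by
      apply mul_lt_mul_of_pos_left hcon (mul_pos hcZ ha1Z)
    nlinarith [mul_pos (mul_pos hbZ ha2Z) ha2Z]
  have hcaZ : (a2:ℤ) ≤ c*a1 := by
    by_contra hcon
    push_neg at hcon
    have h1 : (b:ℤ)*a2*(c*a1) < b*a2*a2 := by
      apply mul_lt_mul_of_pos_left hcon (mul_pos hbZ ha2Z)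
    nlinarith [mul_pos (mul_pos hcZ ha1Z) ha1Z]
  have hW : (q:ℤ)*a2 + a1*p < a1*a2 + a1 + a2 := by
    rcases hPI with ⟨hI1, hI2⟩ | ⟨hII1, hII2⟩
    · by_contra hcon
      push_neg at hcon
      have t1 : (0:ℤ) < (a2:ℤ)*((c:ℤ)*a1^2 - ((c:ℤ)*a1*q + (b:ℤ)*p*((c:ℤ)*a1 - a2))) :=
        mul_pos ha2Z (by linarith)
      have t2 : (0:ℤ) ≤ (c:ℤ)*a1*((q:ℤ)*a2 + a1*p - a1*a2 - a1 - a2) :=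
        mul_nonneg (by positivity) (by linarith)
      have t3 : (0:ℤ) ≤ (p:ℤ)*((b:ℤ)*c*a1*a2 - c*a1^2 - b*a2^2) :=
        mul_nonneg (by positivity) hS5
      have t4 : (0:ℤ) < (c:ℤ)*a1*a2 + c*a1^2 := by positivity
      have hsum : (a2:ℤ)*((c:ℤ)*a1^2 - ((c:ℤ)*a1*q + (b:ℤ)*p*((c:ℤ)*a1 - a2)))
          + (c:ℤ)*a1*((q:ℤ)*a2 + a1*p - a1*a2 - a1 - a2)
          + (p:ℤ)*((b:ℤ)*c*a1*a2 - c*a1^2 - b*a2^2)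
          + ((c:ℤ)*a1*a2 + c*a1^2) = 0 := by ring
      linarith
    · by_contra hcon
      push_neg at hcon
      have t1 : (0:ℤ) < (a1:ℤ)*((b:ℤ)*a2^2 - ((b:ℤ)*a2*p + (c:ℤ)*q*((b:ℤ)*a2 - a1))) :=
        mul_pos ha1Z (by linarith)
      have t2 : (0:ℤ) ≤ (b:ℤ)*a2*((q:ℤ)*a2 + a1*p - a1*a2 - a1 - a2) :=
        mul_nonneg (by positivity) (by linarith)
      have t3 : (0:ℤ) ≤ (q:ℤ)*((b:ℤ)*c*a1*a2 - c*a1^2 - b*a2^2) :=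
        mul_nonneg (by positivity) hS5
      have t4 : (0:ℤ) < (b:ℤ)*a2^2 + b*a1*a2 := by positivity
      have hsum : (a1:ℤ)*((b:ℤ)*a2^2 - ((b:ℤ)*a2*p + (c:ℤ)*q*((b:ℤ)*a2 - a1)))
          + (b:ℤ)*a2*((q:ℤ)*a2 + a1*p - a1*a2 - a1 - a2)
          + (q:ℤ)*((b:ℤ)*c*a1*a2 - c*a1^2 - b*a2^2)
          + ((b:ℤ)*a2^2 + b*a1*a2) = 0 := by ring
      linarith
  refine ⟨Finset.Icc_subset_Icc le_rfl hqa1, Finset.Icc_subset_Icc (by omega) le_rfl, ?_⟩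
  intro j hj l hl
  rw [Finset.mem_Icc] at hj hl
  obtain ⟨hj1, hjq⟩ := hj
  obtain ⟨hl1, hla2⟩ := hl
  have hn : 0 < a1 + a2 := by omega
  have hl1' : 1 ≤ l := by omega
  have hja1 : j ≤ a1 := le_trans hjq hqa1
  obtain ⟨X, hX⟩ : ∃ X, (j-1)*a2/a1 = X := ⟨_, rfl⟩
  have hhj : hpos a1 a2 j = j + X := by rw [show hpos a1 a2 j = j + (j-1)*a2/a1 from rfl, hX]
  have hXa : X*a1 ≤ (j-1)*a2 := by rw [← hX]; exact Nat.div_mul_le_self _ _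
  obtain ⟨Y, hY⟩ : ∃ Y, (l*a1 + a2 - 1)/a2 = Y := ⟨_, rfl⟩
  have hvl : vpos a1 a2 l = l + Y := by
    rw [show vpos a1 a2 l = l + (l*a1+a2-1)/a2 from rfl, hY]
  have hYa : l*a1 ≤ Y*a2 := by
    have h1 : l*a1 + a2 - 1 < (Y+1)*a2 := by
      rw [← hY]; exact St6.lt_div_succ_mul _ _ ha2
    have h2 : (Y+1)*a2 = Y*a2 + a2 := by ring
    omega
  have hjlZ : ((j:ℤ)-1)*a2 < (l:ℤ)*a1 := by
    have hjZ : (j:ℤ) ≤ q := by exact_mod_cast hjq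
    have h1 : ((j:ℤ)-1)*a2 ≤ ((q:ℤ)-1)*a2 :=
      mul_le_mul_of_nonneg_right (by linarith) ha2Z.le
    have h4 : ((a2-p+1 : ℕ):ℤ) = (a2:ℤ)-(p:ℤ)+1 := by omega
    have h3 : ((a2-p+1:ℕ):ℤ) ≤ (l:ℤ) := by exact_mod_cast hl1
    have h2 : ((a2:ℤ)-p+1)*a1 ≤ (l:ℤ)*a1 := by
      apply mul_le_mul_of_nonneg_right _ ha1Z.le
      omega
    nlinarith [hW]
  have hjlN : (j-1)*a2 < l*a1 := by
    zify [hj1]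
    linarith [hjlZ]
  have hwl : X < l := by
    have h1 : X*a1 < l*a1 := lt_of_le_of_lt hXa hjlN
    exact lt_of_mul_lt_mul_right h1 (Nat.zero_le a1)
  have hjr : j - 1 < Y := by
    have h1 : (j-1)*a2 < Y*a2 := lt_of_lt_of_le hjlN hYa
    exact lt_of_mul_lt_mul_right h1 (Nat.zero_le a2)
  set s0 := hpos a1 a2 j - 1 with hs0def
  set f0 := vpos a1 a2 l with hf0def
  have hs0 : s0 = j - 1 + X := by rw [hs0def, hhj]; omega
  have hf0 : f0 = l + Y := hvl
  have hs2f : s0 + 2 ≤ f0 := by omega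
  have hXa2 : X ≤ a2 := by
    have h1 : (j-1)*a2 ≤ a1*a2 := Nat.mul_le_mul_right a2 (by omega)
    have h2 : a1*a2 = a2*a1 := Nat.mul_comm _ _
    have h3 : X*a1 ≤ a2*a1 := by omega
    exact Nat.le_of_mul_le_mul_right h3 ha1
  have hs0n : s0 ≤ a1 + a2 := by omega
  have hYa1 : Y ≤ a1 := by
    have h1 : l*a1 ≤ a2*a1 := Nat.mul_le_mul_right a1 hla2
    have h2 : a2*a1 = a1*a2 := Nat.mul_comm _ _
    rw [← hY]
    calc (l*a1+a2-1)/a2 ≤ (a2*a1 + (a2-1))/a2 := Nat.div_le_div_right (by omega)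
      _ = a1 + (a2-1)/a2 := by rw [Nat.mul_add_div ha2]
      _ = a1 := by rw [Nat.div_eq_of_lt (by omega)]; omega
  have hf0n : f0 ≤ a1 + a2 := by omega
  -- evaluations
  have hHDs0 : St6.HD a1 a2 s0 = j - 1 := by
    have h1 : ¬ (j ≤ St6.HD a1 a2 s0) := by
      rw [← St6.hpos_le_iff a1 a2 j s0 ha1 hj1]
      omega
    have h2 : j - 1 ≤ St6.HD a1 a2 s0 := by
      rcases Nat.lt_or_ge 1 j with hj2 | hj2
      · rw [← St6.hpos_le_iff a1 a2 (j-1) s0 ha1 (by omega)]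
        have h3 : hpos a1 a2 (j-1) < hpos a1 a2 j := St6.hpos_strict a1 a2 (j-1) j (by omega)
        omega
      · omega
    omega
  have hHDs1 : St6.HD a1 a2 (s0+1) = j := by
    have h1 : j ≤ St6.HD a1 a2 (s0+1) := by
      rw [← St6.hpos_le_iff a1 a2 j (s0+1) ha1 hj1]
      omega
    have h2 := St6.HD_step a1 a2 s0 hn
    omega
  have hVDf0 : St6.VD a1 a2 f0 = l := by
    have h1 : l ≤ St6.VD a1 a2 f0 := by
      rw [← St6.vpos_le_iff a1 a2 l f0 ha1 ha2]
    have h2 : ¬ (l+1 ≤ St6.VD a1 a2 f0) := by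
      rw [← St6.vpos_le_iff a1 a2 (l+1) f0 ha1 ha2]
      have h3 : vpos a1 a2 l < vpos a1 a2 (l+1) := St6.vpos_strict a1 a2 l (l+1) (by omega)
      omega
    omega
  have hVDf0m : St6.VD a1 a2 (f0-1) = l - 1 := by
    have h2 : ¬ (l ≤ St6.VD a1 a2 (f0-1)) := by
      rw [← St6.vpos_le_iff a1 a2 l (f0-1) ha1 ha2]
      omega
    have h1 : l - 1 ≤ St6.VD a1 a2 (f0-1) := by
      rcases Nat.lt_or_ge 1 l with hl2 | hl2
      · rw [← St6.vpos_le_iff a1 a2 (l-1) (f0-1) ha1 ha2]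
        have h3 : vpos a1 a2 (l-1) < vpos a1 a2 l := St6.vpos_strict a1 a2 (l-1) l (by omega)
        omega
      · omega
    omega
  have hVDs0 : St6.VD a1 a2 s0 = X := by
    have h := St6.HD_add_VD a1 a2 s0 ha1 ha2 hs0n
    omega
  have hVDs1 : St6.VD a1 a2 (s0+1) = X := by
    have h := St6.HD_add_VD a1 a2 (s0+1) ha1 ha2 (by omega)
    omega
  have hHDf0 : St6.HD a1 a2 f0 = Y := by
    have h := St6.HD_add_VD a1 a2 f0 ha1 ha2 hf0n
    omega
  have hHDf0m : St6.HD a1 a2 (f0-1) = Y := by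
    have h := St6.HD_add_VD a1 a2 (f0-1) ha1 ha2 (by omega)
    omega
  -- translation lemmas
  have TLhor : ∀ Q t, t < f0 →
      horCount a1 a2 (Finset.Icc 1 Q) t f0 + min Q (St6.HD a1 a2 t)
        = min Q (St6.HD a1 a2 f0) := by
    intro Q t ht
    have hsub : subPos (a1+a2) t f0 = Finset.Ioc t f0 := by
      unfold subPos
      rw [if_pos ht]
    unfold horCount
    simp only [hsub]
    rw [← St6.cntH a1 a2 Q f0 ha1, ← St6.cntH a1 a2 Q t ha1]
    exact St6.card_filter_Ioc _ _ (le_of_lt ht)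
  have TLvS2 : ∀ t, t < f0 →
      vertCount a1 a2 (Finset.Icc (a2-p+1) a2) t f0 + (St6.VD a1 a2 t + 1 - (a2-p+1))
        = St6.VD a1 a2 f0 + 1 - (a2-p+1) := by
    intro t ht
    have hsub : subPos (a1+a2) t f0 = Finset.Ioc t f0 := by
      unfold subPos
      rw [if_pos ht]
    unfold vertCount
    simp only [hsub]
    have h1 := St6.card_filter_Ioc (Finset.Icc (a2-p+1) a2) (vpos a1 a2) (le_of_lt ht)
    rw [St6.cntV a1 a2 (a2-p+1) a2 f0 (by omega) ha1 ha2,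
        St6.cntV a1 a2 (a2-p+1) a2 t (by omega) ha1 ha2] at h1
    rw [min_eq_right (St6.VD_le a1 a2 f0 hn hf0n),
        min_eq_right (St6.VD_le a1 a2 t hn (by omega))] at h1
    omega
  have TLvfull : ∀ t, s0 < t → t ≤ a1+a2 →
      vertCount a1 a2 (Finset.Icc 1 a2) s0 t + St6.VD a1 a2 s0 = St6.VD a1 a2 t := by
    intro t ht htn
    have hsub : subPos (a1+a2) s0 t = Finset.Ioc s0 t := by
      unfold subPos
      rw [if_pos ht]
    unfold vertCount
    simp only [hsub]
    have h1 := St6.card_filter_Ioc (Finset.Icc 1 a2) (vpos a1 a2) (le_of_lt ht)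
    rw [St6.cntV a1 a2 1 a2 t le_rfl ha1 ha2, St6.cntV a1 a2 1 a2 s0 le_rfl ha1 ha2] at h1
    rw [min_eq_right (St6.VD_le a1 a2 t hn htn),
        min_eq_right (St6.VD_le a1 a2 s0 hn hs0n)] at h1
    omega
  have TLhS1 : ∀ t, s0 < t →
      horCount a1 a2 (Finset.Icc 1 q) s0 t + min q (St6.HD a1 a2 s0)
        = min q (St6.HD a1 a2 t) := by
    intro t ht
    have hsub : subPos (a1+a2) s0 t = Finset.Ioc s0 t := by
      unfold subPos
      rw [if_pos ht]
    unfold horCount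
    simp only [hsub]
    rw [← St6.cntH a1 a2 q t ha1, ← St6.cntH a1 a2 q s0 ha1]
    exact St6.card_filter_Ioc _ _ (le_of_lt ht)
  -- contradiction setup
  by_contra hcon
  push_neg at hcon
  have hIoo : interiorPos (a1+a2) s0 f0 = Finset.Ioo s0 f0 := by
    unfold interiorPos
    rw [if_pos (by omega)]
  simp only [hIoo] at hcon
  have hno1 : ∀ t, s0 < t → t < f0 →
      horCount a1 a2 (Finset.Icc 1 a1) t f0
        ≠ b * vertCount a1 a2 (Finset.Icc (a2-p+1) a2) t f0 := by
    intro t h1 h2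
    exact (hcon t (Finset.mem_Ioo.2 ⟨h1, h2⟩)).1
  have hno2 : ∀ t, s0 < t → t < f0 →
      vertCount a1 a2 (Finset.Icc 1 a2) s0 t
        ≠ c * horCount a1 a2 (Finset.Icc 1 q) s0 t := by
    intro t h1 h2
    exact (hcon t (Finset.mem_Ioo.2 ⟨h1, h2⟩)).2
  -- claim 1 : going down from f0
  have claim1 : ∀ d t, t + d + 1 = f0 → s0 < t →
      St6.HD a1 a2 f0 + b * (St6.VD a1 a2 t + 1 - (a2-p+1))
        < St6.HD a1 a2 t + b * (St6.VD a1 a2 f0 + 1 - (a2-p+1)) := by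
    intro d
    induction d with
    | zero =>
      intro t h1 h2
      have ht : t = f0 - 1 := by omega
      subst ht
      have e1 : St6.HD a1 a2 (f0-1) = St6.HD a1 a2 f0 := by rw [hHDf0m, hHDf0]
      have e2 : b * (St6.VD a1 a2 (f0-1) + 1 - (a2-p+1)) + b
          = b * (St6.VD a1 a2 f0 + 1 - (a2-p+1)) := by
        rw [hVDf0m, hVDf0]
        have e3 : (l + 1 - (a2-p+1)) = (l - 1 + 1 - (a2-p+1)) + 1 := by omega
        rw [e3, Nat.mul_add, Nat.mul_one]
      omega
    | succ d ih =>
      intro t h1 h2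
      have hIH := ih (t+1) (by omega) (by omega)
      have hsum1 := St6.HD_add_VD a1 a2 t ha1 ha2 (by omega)
      have hsum2 := St6.HD_add_VD a1 a2 (t+1) ha1 ha2 (by omega)
      have hm1 := St6.HD_mono a1 a2 (Nat.le_succ t)
      have hm2 := St6.VD_mono a1 a2 (Nat.le_succ t)
      have hst1 := St6.HD_step a1 a2 t hn
      have hst2 := St6.VD_step a1 a2 t hn
      rcases show (St6.HD a1 a2 (t+1) = St6.HD a1 a2 t + 1 ∧ St6.VD a1 a2 (t+1) = St6.VD a1 a2 t)
          ∨ (St6.HD a1 a2 (t+1) = St6.HD a1 a2 t ∧ St6.VD a1 a2 (t+1) = St6.VD a1 a2 t + 1)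
          from by omega with ⟨eH, eV⟩ | ⟨eH, eV⟩
      · have hne := hno1 t h2 (by omega)
        have T1 := TLhor a1 t (by omega)
        rw [min_eq_right (St6.HD_le a1 a2 t ha1 ha2 (by omega)),
            min_eq_right (St6.HD_le a1 a2 f0 ha1 ha2 hf0n)] at T1
        have T2 := TLvS2 t (by omega)
        have heqF : b * (St6.VD a1 a2 (t+1) + 1 - (a2-p+1))
            = b * (St6.VD a1 a2 t + 1 - (a2-p+1)) := by rw [eV]
        have hne2 : St6.HD a1 a2 f0 + b * (St6.VD a1 a2 t + 1 - (a2-p+1))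
            ≠ St6.HD a1 a2 t + b * (St6.VD a1 a2 f0 + 1 - (a2-p+1)) := by
          intro heq
          apply hne
          have e5 : b * (vertCount a1 a2 (Finset.Icc (a2-p+1) a2) t f0
              + (St6.VD a1 a2 t + 1 - (a2-p+1)))
              = b * (St6.VD a1 a2 f0 + 1 - (a2-p+1)) := by rw [T2]
          rw [Nat.mul_add] at e5
          omega
        omega
      · have hFmono : b * (St6.VD a1 a2 t + 1 - (a2-p+1))
            ≤ b * (St6.VD a1 a2 (t+1) + 1 - (a2-p+1)) :=
          Nat.mul_le_mul_left b (by omega)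
        omega
  -- claim 2 : going up from s0
  have claim2 : ∀ d t, s0 + d + 1 = t → t < f0 →
      St6.VD a1 a2 t + c * min q (St6.HD a1 a2 s0)
        < St6.VD a1 a2 s0 + c * min q (St6.HD a1 a2 t) := by
    intro d
    induction d with
    | zero =>
      intro t h1 h2
      have ht : t = s0 + 1 := by omega
      subst ht
      rw [hVDs1, hVDs0, hHDs1, hHDs0]
      rw [min_eq_right (show j-1 ≤ q by omega), min_eq_right hjq]
      have h3 : c*(j-1) < c*j := mul_lt_mul_of_pos_left (by omega) hc
      omega
    | succ d ih =>
      intro t h1 h2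
      have hIH := ih (s0+d+1) rfl (by omega)
      have htt : t = (s0+d+1) + 1 := by omega
      subst htt
      have hsum1 := St6.HD_add_VD a1 a2 (s0+d+1) ha1 ha2 (by omega)
      have hsum2 := St6.HD_add_VD a1 a2 (s0+d+1+1) ha1 ha2 (by omega)
      have hm1 := St6.HD_mono a1 a2 (Nat.le_succ (s0+d+1))
      have hm2 := St6.VD_mono a1 a2 (Nat.le_succ (s0+d+1))
      have hst1 := St6.HD_step a1 a2 (s0+d+1) hn
      have hst2 := St6.VD_step a1 a2 (s0+d+1) hn
      rcases show (St6.HD a1 a2 (s0+d+1+1) = St6.HD a1 a2 (s0+d+1) + 1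
            ∧ St6.VD a1 a2 (s0+d+1+1) = St6.VD a1 a2 (s0+d+1))
          ∨ (St6.HD a1 a2 (s0+d+1+1) = St6.HD a1 a2 (s0+d+1)
            ∧ St6.VD a1 a2 (s0+d+1+1) = St6.VD a1 a2 (s0+d+1) + 1)
          from by omega with ⟨eH, eV⟩ | ⟨eH, eV⟩
      · have hGmono : c * min q (St6.HD a1 a2 (s0+d+1))
            ≤ c * min q (St6.HD a1 a2 (s0+d+1+1)) :=
          Nat.mul_le_mul_left c (min_le_min le_rfl hm1)
        omega
      · have hne := hno2 (s0+d+1+1) (by omega) h2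
        have T3 := TLvfull (s0+d+1+1) (by omega) (by omega)
        have T4 := TLhS1 (s0+d+1+1) (by omega)
        have heqG : c * min q (St6.HD a1 a2 (s0+d+1+1))
            = c * min q (St6.HD a1 a2 (s0+d+1)) := by rw [eH]
        have hne2 : St6.VD a1 a2 (s0+d+1+1) + c * min q (St6.HD a1 a2 s0)
            ≠ St6.VD a1 a2 s0 + c * min q (St6.HD a1 a2 (s0+d+1+1)) := by
          intro heq
          apply hne
          have e5 : c * (horCount a1 a2 (Finset.Icc 1 q) s0 (s0+d+1+1)
              + min q (St6.HD a1 a2 s0))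
              = c * min q (St6.HD a1 a2 (s0+d+1+1)) := by rw [T4]
          rw [Nat.mul_add] at e5
          omega
        omega
  -- conclusions
  have hc1 := claim1 (f0 - s0 - 2) (s0+1) (by omega) (by omega)
  rw [hHDf0, hHDs1, hVDs1, hVDf0] at hc1
  have hc2 := claim2 (f0 - s0 - 2) (f0-1) (by omega) (by omega)
  rw [hVDf0m, hVDs0, hHDs0, hHDf0m] at hc2
  rw [min_eq_right (show j-1 ≤ q by omega)] at hc2
  have hc2' : (l-1) + c*(j-1) < X + c*q := by
    have h1 : c * min q Y ≤ c * q := Nat.mul_le_mul_left c (min_le_left _ _)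
    omega
  -- to integers
  have hS2Z : (Y:ℤ) + 1 ≤ (j:ℤ) + (b:ℤ)*((l:ℤ) + (p:ℤ) - (a2:ℤ)) := by
    have hcast : (Y:ℤ) + (b:ℤ)*(((X+1-(a2-p+1) : ℕ)):ℤ)
        < (j:ℤ) + (b:ℤ)*(((l+1-(a2-p+1) : ℕ)):ℤ) := by
      exact_mod_cast hc1
    rw [show (((l+1-(a2-p+1) : ℕ)):ℤ) = (l:ℤ)+(p:ℤ)-(a2:ℤ) from by omega] at hcast
    have eA : (0:ℤ) ≤ (b:ℤ) * (((X+1-(a2-p+1) : ℕ)):ℤ) := by positivity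
    linarith
  have hS1Z : (c:ℤ)*((j:ℤ)-1) + ((l:ℤ) - (X:ℤ)) ≤ (c:ℤ)*q := by
    have hc2'' : l + c*(j-1) < X + c*q + 1 := by omega
    have hcast : (l:ℤ) + (c:ℤ)*(((j-1:ℕ)):ℤ) < (X:ℤ) + (c:ℤ)*(q:ℤ) + 1 := by
      exact_mod_cast hc2''
    rw [show (((j-1:ℕ)):ℤ) = (j:ℤ) - 1 from by omega] at hcast
    linarith
  have hYaZ : (l:ℤ)*a1 ≤ (Y:ℤ)*a2 := by exact_mod_cast hYa
  have hXaZ : (X:ℤ)*a1 ≤ ((j:ℤ)-1)*a2 := by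
    have hcast : (X:ℤ)*(a1:ℤ) ≤ (((j-1:ℕ)):ℤ)*(a2:ℤ) := by exact_mod_cast hXa
    rw [show (((j-1:ℕ)):ℤ) = (j:ℤ) - 1 from by omega] at hcast
    exact hcast
  have hjZ1 : (1:ℤ) ≤ (j:ℤ) := by exact_mod_cast hj1
  have hlZa2 : (l:ℤ) ≤ (a2:ℤ) := by exact_mod_cast hla2
  rcases hPI with ⟨hI1, hI2⟩ | ⟨hII1, hII2⟩
  · -- case I
    have t1 : (0:ℤ) ≤ (a1:ℤ)*a2*((c:ℤ)*q - (c:ℤ)*((j:ℤ)-1) - ((l:ℤ) - X)) :=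
      mul_nonneg (by positivity) (by linarith)
    have t2 : (0:ℤ) ≤ (a2:ℤ)*((c:ℤ)*a1-(a2:ℤ))*((b:ℤ)*((l:ℤ)+(p:ℤ)-(a2:ℤ)) - ((Y:ℤ)-(j:ℤ)+1)) :=
      mul_nonneg (mul_nonneg ha2Z.le (by linarith)) (by linarith)
    have t3 : (0:ℤ) ≤ (a2:ℤ)*(((j:ℤ)-1)*a2 - (X:ℤ)*a1) :=
      mul_nonneg ha2Z.le (by linarith)
    have t4 : (0:ℤ) ≤ ((c:ℤ)*a1-(a2:ℤ))*((Y:ℤ)*a2 - (l:ℤ)*a1) :=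
      mul_nonneg (by linarith) (by linarith)
    have t5 : (0:ℤ) ≤ ((a2:ℤ)-(l:ℤ))*((b:ℤ)*c*a1*a2 - c*a1^2 - b*a2^2) :=
      mul_nonneg (by linarith) hS5
    have t6 : (0:ℤ) < (a2:ℤ)*((c:ℤ)*a1^2 - ((c:ℤ)*a1*q + (b:ℤ)*p*((c:ℤ)*a1 - a2))) :=
      mul_pos ha2Z (by linarith)
    have hsum : (a1:ℤ)*a2*((c:ℤ)*q - (c:ℤ)*((j:ℤ)-1) - ((l:ℤ) - X))
        + (a2:ℤ)*((c:ℤ)*a1-(a2:ℤ))*((b:ℤ)*((l:ℤ)+(p:ℤ)-(a2:ℤ)) - ((Y:ℤ)-(j:ℤ)+1))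
        + (a2:ℤ)*(((j:ℤ)-1)*a2 - (X:ℤ)*a1)
        + ((c:ℤ)*a1-(a2:ℤ))*((Y:ℤ)*a2 - (l:ℤ)*a1)
        + ((a2:ℤ)-(l:ℤ))*((b:ℤ)*c*a1*a2 - c*a1^2 - b*a2^2)
        + (a2:ℤ)*((c:ℤ)*a1^2 - ((c:ℤ)*a1*q + (b:ℤ)*p*((c:ℤ)*a1 - a2))) = 0 := by ring
    linarith
  · -- case II
    have t1 : (0:ℤ) ≤ (a1:ℤ)*a2*((b:ℤ)*((l:ℤ)+(p:ℤ)-(a2:ℤ)) - ((Y:ℤ)-(j:ℤ)+1)) :=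
      mul_nonneg (by positivity) (by linarith)
    have t2 : (0:ℤ) ≤ (a1:ℤ)*((b:ℤ)*a2-(a1:ℤ))*((c:ℤ)*q - (c:ℤ)*((j:ℤ)-1) - ((l:ℤ) - X)) :=
      mul_nonneg (mul_nonneg ha1Z.le (by linarith)) (by linarith)
    have t3 : (0:ℤ) ≤ (a1:ℤ)*((Y:ℤ)*a2 - (l:ℤ)*a1) :=
      mul_nonneg ha1Z.le (by linarith)
    have t4 : (0:ℤ) ≤ ((b:ℤ)*a2-(a1:ℤ))*(((j:ℤ)-1)*a2 - (X:ℤ)*a1) :=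
      mul_nonneg (by linarith) (by linarith)
    have t5 : (0:ℤ) ≤ ((j:ℤ)-1)*((b:ℤ)*c*a1*a2 - c*a1^2 - b*a2^2) :=
      mul_nonneg (by linarith) hS5
    have t6 : (0:ℤ) < (a1:ℤ)*((b:ℤ)*a2^2 - ((b:ℤ)*a2*p + (c:ℤ)*q*((b:ℤ)*a2 - a1))) :=
      mul_pos ha1Z (by linarith)
    have hsum : (a1:ℤ)*a2*((b:ℤ)*((l:ℤ)+(p:ℤ)-(a2:ℤ)) - ((Y:ℤ)-(j:ℤ)+1))
        + (a1:ℤ)*((b:ℤ)*a2-(a1:ℤ))*((c:ℤ)*q - (c:ℤ)*((j:ℤ)-1) - ((l:ℤ) - X))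
        + (a1:ℤ)*((Y:ℤ)*a2 - (l:ℤ)*a1)
        + ((b:ℤ)*a2-(a1:ℤ))*(((j:ℤ)-1)*a2 - (X:ℤ)*a1)
        + ((j:ℤ)-1)*((b:ℤ)*c*a1*a2 - c*a1^2 - b*a2^2)
        + (a1:ℤ)*((b:ℤ)*a2^2 - ((b:ℤ)*a2*p + (c:ℤ)*q*((b:ℤ)*a2 - a1))) = 0 := by ring
    linarith
end

section
/- Suppose (a1,a2) is a positive imaginary root and p,q are positive integers with a1·p + a2·q < a1·a2 + a1 + a2. If for every pair of integers p',q' with 1 ≤ p' ≤ p and 1 ≤ q' ≤ q at least one of the inequalities (b·a2 - a1)·(p'-1) - a2·(q'-1) > (b·p - a1)·a2 or (c·a1 - a2)·(q'-1) - a1·(p'-1) > (c·q - a2)·a1 holds, then the extremal pair of size (q; p) in the maximal Dyck path D^{a1×a2} is compatible. -/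
open Finset

lemma hpos_mono (a1 a2 : ℕ) : StrictMono (hpos a1 a2) := by
  intro x y hxy
  have h1 : (x-1)*a2/a1 ≤ (y-1)*a2/a1 :=
    Nat.div_le_div_right (Nat.mul_le_mul_right _ (by omega))
  unfold hpos; omega

lemma vpos_mono (a1 a2 : ℕ) : StrictMono (vpos a1 a2) := by
  intro x y hxy
  have h0 : x*a1 ≤ y*a1 := Nat.mul_le_mul_right _ hxy.le
  have h1 : (x*a1 + a2 - 1)/a2 ≤ (y*a1 + a2 - 1)/a2 :=
    Nat.div_le_div_right (by omega)
  unfold vpos; omega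

lemma hpos_lt_vpos {a1 a2 j l : ℕ} (ha1 : 0 < a1) (ha2 : 0 < a2) (hj : 1 ≤ j)
    (h : (j-1)*a2 < l*a1) : hpos a1 a2 j < vpos a1 a2 l := by
  have h1 : (j-1)*a2/a1 < l := (Nat.div_lt_iff_lt_mul ha1).mpr h
  have hj' : (j-1)*a2 + a2 = j * a2 := by
    obtain ⟨j', rfl⟩ : ∃ j', j = j' + 1 := ⟨j-1, by omega⟩
    simp; ring
  have h2 : j ≤ (l*a1 + a2 - 1)/a2 := by
    rw [Nat.le_div_iff_mul_le ha2]; omega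
  unfold hpos vpos; omega

lemma vpos_lt_hpos {a1 a2 j l : ℕ} (ha1 : 0 < a1) (ha2 : 0 < a2) (hj : 1 ≤ j)
    (h : l*a1 ≤ (j-1)*a2) : vpos a1 a2 l < hpos a1 a2 j := by
  have h1 : l ≤ (j-1)*a2/a1 := (Nat.le_div_iff_mul_le ha1).mpr h
  have h2 : (l*a1 + a2 - 1)/a2 ≤ j - 1 := by
    rw [Nat.div_le_iff_le_mul_add_pred ha2]
    have : a2 * (j-1) = (j-1) * a2 := by ring
    omega
  unfold hpos vpos; omega

lemma count_step_le {S : Finset ℕ} {pf : ℕ → ℕ} (hinj : Function.Injective pf) (t f : ℕ) :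
    (S.filter fun x => pf x ∈ Finset.Ioc t f).card
      ≤ (S.filter fun x => pf x ∈ Finset.Ioc (t+1) f).card + 1 := by
  have hsub : S.filter (fun x => pf x ∈ Finset.Ioc t f)
      ⊆ (S.filter fun x => pf x ∈ Finset.Ioc (t+1) f) ∪ S.filter (fun x => pf x = t+1) := by
    intro x hx
    rw [mem_filter, mem_Ioc] at hx
    rw [mem_union, mem_filter, mem_filter, mem_Ioc]
    obtain ⟨hS, h1, h2⟩ := hx
    by_cases he : pf x = t+1
    · exact Or.inr ⟨hS, he⟩
    · exact Or.inl ⟨hS, by omega, h2⟩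
  calc (S.filter fun x => pf x ∈ Finset.Ioc t f).card
      ≤ _ := card_le_card hsub
    _ ≤ (S.filter fun x => pf x ∈ Finset.Ioc (t+1) f).card
        + (S.filter (fun x => pf x = t+1)).card := card_union_le _ _
    _ ≤ _ := by
        gcongr
        apply card_le_one.mpr
        intro a ha b hb
        rw [mem_filter] at ha hb
        exact hinj (ha.2.trans hb.2.symm)

lemma count_mono {S : Finset ℕ} {pf : ℕ → ℕ} {I J : Finset ℕ} (hIJ : I ⊆ J) :
    (S.filter fun x => pf x ∈ I).card ≤ (S.filter fun x => pf x ∈ J).card := by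
  apply card_le_card
  intro x hx
  rw [mem_filter] at hx ⊢
  exact ⟨hx.1, hIJ hx.2⟩

lemma count_step_le' {S : Finset ℕ} {pf : ℕ → ℕ} (hinj : Function.Injective pf) (e t : ℕ) :
    (S.filter fun x => pf x ∈ Finset.Ioc e (t+1)).card
      ≤ (S.filter fun x => pf x ∈ Finset.Ioc e t).card + 1 := by
  have hsub : S.filter (fun x => pf x ∈ Finset.Ioc e (t+1))
      ⊆ (S.filter fun x => pf x ∈ Finset.Ioc e t) ∪ S.filter (fun x => pf x = t+1) := by
    intro x hx
    rw [mem_filter, mem_Ioc] at hx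
    rw [mem_union, mem_filter, mem_filter, mem_Ioc]
    obtain ⟨hS, h1, h2⟩ := hx
    by_cases he : pf x = t+1
    · exact Or.inr ⟨hS, he⟩
    · exact Or.inl ⟨hS, h1, by omega⟩
  calc (S.filter fun x => pf x ∈ Finset.Ioc e (t+1)).card
      ≤ _ := card_le_card hsub
    _ ≤ (S.filter fun x => pf x ∈ Finset.Ioc e t).card
        + (S.filter (fun x => pf x = t+1)).card := card_union_le _ _
    _ ≤ _ := by
        gcongr
        apply card_le_one.mpr
        intro a ha b hb
        rw [mem_filter] at ha hb
        exact hinj (ha.2.trans hb.2.symm)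

lemma ivt (g : ℕ → ℤ) : ∀ (d a : ℕ), 0 < g a → g (a + d) < 0 →
    (∀ t, a ≤ t → t < a + d → g t - 1 ≤ g (t+1)) →
    ∃ t, a < t ∧ t < a + d ∧ g t = 0 := by
  intro d
  induction d with
  | zero => intro a ha hb _; simp only [Nat.add_zero] at hb; omega
  | succ d ih =>
    intro a ha hb hstep
    have hs0 : g a - 1 ≤ g (a+1) := hstep a le_rfl (by omega)
    have hb' : g (a + 1 + d) < 0 := by rwa [show a+1+d = a + (d+1) by omega]
    rcases lt_trichotomy (g (a+1)) 0 with h | h | h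
    · omega
    · refine ⟨a+1, by omega, ?_, h⟩
      rcases Nat.eq_zero_or_pos d with rfl | hd
      · exfalso; simp only [Nat.add_zero] at hb'; omega
      · omega
    · obtain ⟨t, ht1, ht2, ht3⟩ := ih (a+1) h hb'
        (fun t h1 h2 => hstep t (by omega) (by omega))
      exact ⟨t, by omega, by omega, ht3⟩

lemma horCount_eq (a1 a2 : ℕ) (S : Finset ℕ) {s f : ℕ} (h : s < f) :
    horCount a1 a2 S s f = (S.filter fun x => hpos a1 a2 x ∈ Finset.Ioc s f).card := by
  unfold horCount subPos; rw [if_pos h]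

lemma vertCount_eq (a1 a2 : ℕ) (S : Finset ℕ) {s f : ℕ} (h : s < f) :
    vertCount a1 a2 S s f = (S.filter fun x => vpos a1 a2 x ∈ Finset.Ioc s f).card := by
  unfold vertCount subPos; rw [if_pos h]

lemma ceil_div_mul_ge (x k : ℕ) (hk : 0 < k) : x ≤ ((x + k - 1)/k) * k := by
  have h0 := Nat.div_add_mod (x + k - 1) k
  have h1 : (x + k - 1) % k < k := Nat.mod_lt _ hk
  have h2 : k * ((x + k - 1)/k) = ((x + k - 1)/k) * k := Nat.mul_comm _ _
  omega

lemma div_succ_mul_gt (x k : ℕ) (hk : 0 < k) : x < (x/k + 1)*k := by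
  have h0 := Nat.div_add_mod x k
  have h1 : x % k < k := Nat.mod_lt _ hk
  have h2 : (x/k + 1)*k = k*(x/k) + k := by ring
  omega

lemma ceil_div_le (x k m : ℕ) (hk : 0 < k) (h : x ≤ k*m) : (x + k - 1)/k ≤ m := by
  rw [Nat.div_le_iff_le_mul_add_pred hk]
  omega

set_option maxHeartbeats 2000000 in
/-- Suppose `(a1,a2)` is a positive imaginary root and `p, q` are
positive integers with `a1·p + a2·q < a1·a2 + a1 + a2`.  If for all `1 ≤ p' ≤ p`,
`1 ≤ q' ≤ q` at least one of
`(b·a2 - a1)(p'-1) - a2(q'-1) > (b·p - a1)·a2` or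
`(c·a1 - a2)(q'-1) - a1(p'-1) > (c·q - a2)·a1` holds, then the extremal pair of
size `(q; p)` in `D^{a1×a2}` is compatible. -/
theorem statement8 (b c : ℕ) (hb : 0 < b) (hc : 0 < c)
    (a1 a2 : ℕ) (ha1 : 0 < a1) (ha2 : 0 < a2) (hroot : Qf b c a1 a2 ≤ 0)
    (p q : ℕ) (hp : 0 < p) (hq : 0 < q)
    (hlt : (a1 : ℤ) * p + (a2 : ℤ) * q < (a1 : ℤ) * a2 + a1 + a2)
    (hineq : ∀ p' q' : ℕ, 1 ≤ p' → p' ≤ p → 1 ≤ q' → q' ≤ q →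
      ((b : ℤ) * a2 - a1) * ((p' : ℤ) - 1) - (a2 : ℤ) * ((q' : ℤ) - 1)
          > ((b : ℤ) * p - a1) * a2 ∨
      ((c : ℤ) * a1 - a2) * ((q' : ℤ) - 1) - (a1 : ℤ) * ((p' : ℤ) - 1)
          > ((c : ℤ) * q - a2) * a1) :
    Compatible b c a1 a2 (Finset.Icc 1 q) (Finset.Icc (a2 - p + 1) a2) := by
  have hltn : a1*p + a2*q < a1*a2 + a1 + a2 := by exact_mod_cast hlt
  have hqa1 : q ≤ a1 := by
    have h1 : a1*1 ≤ a1*p := Nat.mul_le_mul_left _ hp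
    have h3 : a2*q < a2*(a1+1) := by
      have hc1 : a2*(a1+1) = a1*a2 + a2 := by ring
      omega
    exact Nat.le_of_lt_succ (Nat.lt_of_mul_lt_mul_left h3)
  have hpa2 : p ≤ a2 := by
    have h1 : a2*1 ≤ a2*q := Nat.mul_le_mul_left _ hq
    have h3 : a1*p < a1*(a2+1) := by
      have hc1 : a1*(a2+1) = a1*a2 + a1 := by ring
      omega
    exact Nat.le_of_lt_succ (Nat.lt_of_mul_lt_mul_left h3)
  refine ⟨Finset.Icc_subset_Icc le_rfl hqa1, Finset.Icc_subset_Icc (by omega) le_rfl, ?_⟩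
  intro j hj l hl
  rw [Finset.mem_Icc] at hj hl
  obtain ⟨hj1, hjq⟩ := hj
  obtain ⟨hl1, hla2⟩ := hl
  have hl1' : a2 + 1 ≤ l + p := by omega
  -- key fact : (j-1)*a2 < l*a1
  have hkey : (j-1)*a2 < l*a1 := by
    have h1 : (j-1)*a2 ≤ (q-1)*a2 := Nat.mul_le_mul_right _ (by omega)
    have h2 : (q-1)*a2 + a2 = q*a2 := by
      obtain ⟨q', rfl⟩ : ∃ q', q = q' + 1 := ⟨q-1, by omega⟩
      simp; ring
    have h3 : a1*(a2-p) + a1*p = a1*a2 := by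
      have h4 : a1*(a2-p) + a1*p = a1*(a2-p+p) := by ring
      rw [h4, Nat.sub_add_cancel hpa2]
    have h5 : a1*(a2-p+1) ≤ a1*l := Nat.mul_le_mul_left _ (by omega)
    have h6 : a1*(a2-p+1) = a1*(a2-p) + a1 := by ring
    have h7 : a1*l = l*a1 := by ring
    have h8 : a2*q = q*a2 := by ring
    omega
  have hj1a : j ≤ a1 := le_trans hjq hqa1
  obtain ⟨P, hP⟩ : ∃ P, hpos a1 a2 j = P := ⟨_, rfl⟩
  obtain ⟨f, hf⟩ : ∃ f, vpos a1 a2 l = f := ⟨_, rfl⟩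
  have hjP : j ≤ P := by rw [← hP]; exact Nat.le_add_right _ _
  have hPf : P < f := by rw [← hP, ← hf]; exact hpos_lt_vpos ha1 ha2 hj1 hkey
  obtain ⟨e, he⟩ : ∃ e, P - 1 = e := ⟨_, rfl⟩
  have he1 : e + 1 = P := by omega
  have hef : e + 1 < f := by omega
  have hgoal_e : hpos a1 a2 j - 1 = e := by rw [hP, he]
  -- the inequality at (p', q') = (a2+1-l, j)
  have hp'1 : 1 ≤ a2 + 1 - l := by omega
  have hp'p : a2 + 1 - l ≤ p := by omega
  have hcast : ((a2 + 1 - l : ℕ) : ℤ) - 1 = (a2:ℤ) - l := by omega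
  have hmain := hineq (a2+1-l) j hp'1 hp'p hj1 hjq
  rw [hcast] at hmain
  have hinj_h : Function.Injective (hpos a1 a2) := (hpos_mono a1 a2).injective
  have hinj_v : Function.Injective (vpos a1 a2) := (vpos_mono a1 a2).injective
  rw [hgoal_e, hf]
  rcases hmain with hin1 | hin2
  · -- CASE 1: find zero of g t = horCount (Icc 1 a1) t f - b * vertCount S2 t f
    obtain ⟨K, hK⟩ : ∃ K, (l*a1 + a2 - 1)/a2 = K := ⟨_, rfl⟩
    have hfK : f = l + K := by rw [← hf, ← hK]; rfl
    have hKa1 : K ≤ a1 := by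
      rw [← hK]
      exact ceil_div_le _ _ _ ha2 (by
        have := Nat.mul_le_mul_right a1 hla2
        have hc1 : a2*a1 = a2*a1 := rfl
        omega)
    have hKge : l*a1 ≤ K*a2 := by rw [← hK]; exact ceil_div_mul_ge _ _ ha2
    have hKle : K*a2 ≤ l*a1 + a2 - 1 := by rw [← hK]; exact Nat.div_mul_le_self _ _
    -- from hin1 : K ≥ j + b*(l + p - a2)  (all as integers)
    have hKbig : (j:ℤ) + (b:ℤ)*((l:ℤ)+(p:ℤ)-(a2:ℤ)) ≤ (K:ℤ) := by
      have hKgeZ : (l:ℤ)*(a1:ℤ) ≤ (K:ℤ)*(a2:ℤ) := by exact_mod_cast hKge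
      have ha2Z : (0:ℤ) < (a2:ℤ) := by exact_mod_cast ha2
      have hmul : ((j:ℤ) - 1 + (b:ℤ)*((l:ℤ)+(p:ℤ)-(a2:ℤ))) * (a2:ℤ) < (K:ℤ)*(a2:ℤ) := by
        linarith only [hin1, hKgeZ]
      have h9 := lt_of_mul_lt_mul_right hmul (le_of_lt ha2Z)
      omega
    have hjK : j ≤ K := by
      have hbl : (1:ℤ) ≤ (b:ℤ)*((l:ℤ)+(p:ℤ)-(a2:ℤ)) := by
        have h1 : (1:ℤ) ≤ (b:ℤ) := by exact_mod_cast hb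
        have h2 : (1:ℤ) ≤ (l:ℤ)+(p:ℤ)-(a2:ℤ) := by omega
        have h3 := mul_le_mul h1 h2 (by norm_num) (by linarith only [h1])
        linarith only [h3]
      have h9 : (j:ℤ) + 1 ≤ (K:ℤ) := by omega
      omega
    -- lower bound on horCount at e
    have hHc : K + 1 - j ≤ horCount a1 a2 (Finset.Icc 1 a1) e f := by
      rw [horCount_eq _ _ _ (by omega : e < f)]
      have hsub : Finset.Icc j K ⊆ (Finset.Icc 1 a1).filter
          (fun x => hpos a1 a2 x ∈ Finset.Ioc e f) := by
        intro x hx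
        rw [Finset.mem_Icc] at hx
        rw [Finset.mem_filter, Finset.mem_Icc, Finset.mem_Ioc]
        refine ⟨⟨by omega, le_trans hx.2 hKa1⟩, ?_, ?_⟩
        · have h9 := (hpos_mono a1 a2).monotone hx.1
          rw [hP] at h9
          omega
        · rw [← hf]
          apply le_of_lt
          apply hpos_lt_vpos ha1 ha2 (by omega)
          have h1 : (x-1)*a2 ≤ (K-1)*a2 := Nat.mul_le_mul_right _ (by omega)
          have h3 : (K-1)*a2 + a2 = K*a2 := by
            obtain ⟨K', rfl⟩ : ∃ K', K = K' + 1 := ⟨K-1, by omega⟩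
            simp [Nat.add_mul]
          omega
      calc K + 1 - j = (Finset.Icc j K).card := (Nat.card_Icc j K).symm
        _ ≤ _ := Finset.card_le_card hsub
    -- upper bound on vertCount S2 at e
    have hVc : vertCount a1 a2 (Finset.Icc (a2-p+1) a2) e f ≤ l + p - a2 := by
      rw [vertCount_eq _ _ _ (by omega : e < f)]
      have hsub : (Finset.Icc (a2-p+1) a2).filter
          (fun x => vpos a1 a2 x ∈ Finset.Ioc e f) ⊆ Finset.Icc (a2-p+1) l := by
        intro x hx
        rw [Finset.mem_filter, Finset.mem_Icc, Finset.mem_Ioc] at hx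
        rw [Finset.mem_Icc]
        refine ⟨hx.1.1, ?_⟩
        by_contra hxl
        have h9 : vpos a1 a2 l < vpos a1 a2 x := vpos_mono a1 a2 (by omega)
        rw [hf] at h9
        omega
      calc ((Finset.Icc (a2-p+1) a2).filter (fun x => vpos a1 a2 x ∈ Finset.Ioc e f)).card
          ≤ (Finset.Icc (a2-p+1) l).card := Finset.card_le_card hsub
        _ = l + 1 - (a2-p+1) := Nat.card_Icc _ _
        _ ≤ l + p - a2 := by omega
    -- define g and apply IVT
    obtain ⟨g, hg⟩ : ∃ g : ℕ → ℤ, g = fun t =>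
        (horCount a1 a2 (Finset.Icc 1 a1) t f : ℤ)
          - (b:ℤ) * (vertCount a1 a2 (Finset.Icc (a2-p+1) a2) t f : ℤ) := ⟨_, rfl⟩
    have hgt : ∀ t, g t = (horCount a1 a2 (Finset.Icc 1 a1) t f : ℤ)
          - (b:ℤ) * (vertCount a1 a2 (Finset.Icc (a2-p+1) a2) t f : ℤ) := by
      intro t; rw [hg]
    have hge : 0 < g e := by
      rw [hgt]
      have h1 : ((K:ℤ) + 1 - j) ≤ (horCount a1 a2 (Finset.Icc 1 a1) e f : ℤ) := by
        have h9 := hHc; omega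
      have h2 : (vertCount a1 a2 (Finset.Icc (a2-p+1) a2) e f : ℤ) ≤ (l:ℤ)+(p:ℤ)-(a2:ℤ) := by
        have h9 := hVc; omega
      have h3 : (b:ℤ) * (vertCount a1 a2 (Finset.Icc (a2-p+1) a2) e f : ℤ)
          ≤ (b:ℤ) * ((l:ℤ)+(p:ℤ)-(a2:ℤ)) :=
        mul_le_mul_of_nonneg_left h2 (by positivity)
      linarith only [hKbig, h1, h3]
    have hgf : g (f-1) < 0 := by
      rw [hgt]
      have hf1 : f - 1 < f := by omega
      have hHc0 : horCount a1 a2 (Finset.Icc 1 a1) (f-1) f = 0 := by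
        rw [horCount_eq _ _ _ hf1]
        rw [Finset.card_eq_zero, Finset.filter_eq_empty_iff]
        intro x hx
        rw [Finset.mem_Icc] at hx
        rw [Finset.mem_Ioc]
        intro hcon
        have hxf : hpos a1 a2 x = f := by omega
        rcases Nat.lt_or_ge ((x-1)*a2) (l*a1) with hlt' | hge'
        · have h9 := hpos_lt_vpos ha1 ha2 hx.1 hlt'
          rw [hf] at h9; omega
        · have h9 := vpos_lt_hpos ha1 ha2 hx.1 hge'
          rw [hf] at h9; omega
      have hVc1 : vertCount a1 a2 (Finset.Icc (a2-p+1) a2) (f-1) f = 1 := by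
        rw [vertCount_eq _ _ _ hf1]
        have heq : (Finset.Icc (a2-p+1) a2).filter
            (fun x => vpos a1 a2 x ∈ Finset.Ioc (f-1) f) = {l} := by
          ext x
          rw [Finset.mem_filter, Finset.mem_Icc, Finset.mem_Ioc, Finset.mem_singleton]
          constructor
          · rintro ⟨⟨hx1, hx2⟩, hx3, hx4⟩
            exact hinj_v (by rw [hf]; omega : vpos a1 a2 x = vpos a1 a2 l)
          · rintro rfl
            exact ⟨⟨hl1, hla2⟩, by omega, by omega⟩
        rw [heq, Finset.card_singleton]
      rw [hHc0, hVc1]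
      simp only [Nat.cast_zero, Nat.cast_one, mul_one, zero_sub, neg_neg, Left.neg_neg_iff]
      exact_mod_cast hb
    have hstep : ∀ t, e ≤ t → t < e + (f - 1 - e) → g t - 1 ≤ g (t+1) := by
      intro t _ ht2
      rw [hgt, hgt]
      have h1 := count_step_le hinj_h (S := Finset.Icc 1 a1) t f
      have h2 := count_mono (S := Finset.Icc (a2-p+1) a2) (pf := vpos a1 a2)
        (Finset.Ioc_subset_Ioc (by omega : t ≤ t+1) (le_refl f))
      rw [horCount_eq _ _ _ (by omega : t < f), horCount_eq _ _ _ (by omega : t+1 < f),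
        vertCount_eq _ _ _ (by omega : t < f), vertCount_eq _ _ _ (by omega : t+1 < f)]
      have hbnn : (0:ℤ) ≤ (b:ℤ) := by positivity
      have h2' : (((Finset.Icc (a2-p+1) a2).filter
            (fun x => vpos a1 a2 x ∈ Finset.Ioc (t+1) f)).card : ℤ)
          ≤ (((Finset.Icc (a2-p+1) a2).filter
            (fun x => vpos a1 a2 x ∈ Finset.Ioc t f)).card : ℤ) := by exact_mod_cast h2
      have h1' : (((Finset.Icc 1 a1).filter
            (fun x => hpos a1 a2 x ∈ Finset.Ioc t f)).card : ℤ)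
          ≤ (((Finset.Icc 1 a1).filter
            (fun x => hpos a1 a2 x ∈ Finset.Ioc (t+1) f)).card : ℤ) + 1 := by
        exact_mod_cast h1
      linarith only [h1', mul_le_mul_of_nonneg_left h2' hbnn]
    obtain ⟨t, ht1, ht2, ht3⟩ := ivt g (f - 1 - e) e hge
      (by rw [show e + (f-1-e) = f-1 by omega]; exact hgf) hstep
    refine ⟨t, ?_, Or.inl ?_⟩
    · unfold interiorPos
      rw [if_pos (by omega : e < f)]
      rw [Finset.mem_Ioo]
      exact ⟨by omega, by omega⟩
    · rw [hgt] at ht3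
      omega
  · -- CASE 2: find zero of h t = c * horCount S1 e t - vertCount (Icc 1 a2) e t
    obtain ⟨M, hM⟩ : ∃ M, (j-1)*a2/a1 = M := ⟨_, rfl⟩
    have heM : e = j - 1 + M := by
      rw [← he, ← hP, ← hM]
      unfold hpos
      generalize (j-1)*a2/a1 = D
      omega
    have hMle : M*a1 ≤ (j-1)*a2 := by rw [← hM]; exact Nat.div_mul_le_self _ _
    have hMlt : (j-1)*a2 < (M+1)*a1 := by rw [← hM]; exact div_succ_mul_gt _ _ ha1
    have hMl : M + 1 ≤ l := by
      have h9 : (j-1)*a2/a1 < l := (Nat.div_lt_iff_lt_mul ha1).mpr hkey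
      omega
    -- from hin2 : l - M ≥ c*(q+1-j) + 1 (integers)
    have hlMbig : (c:ℤ)*((q:ℤ)+1-(j:ℤ)) + 1 ≤ (l:ℤ) - (M:ℤ) := by
      have hMleZ : (M:ℤ)*(a1:ℤ) ≤ ((j:ℤ)-1)*(a2:ℤ) := by
        have h8 : ((M*a1 : ℕ):ℤ) ≤ (((j-1)*a2 : ℕ):ℤ) := by exact_mod_cast hMle
        have hcast2 : (((j-1)*a2 : ℕ):ℤ) = ((j:ℤ)-1)*(a2:ℤ) := by
          push_cast [Nat.cast_sub hj1]
          ring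
        rw [hcast2] at h8
        exact_mod_cast h8
      have ha1Z : (0:ℤ) < (a1:ℤ) := by exact_mod_cast ha1
      have hmul : ((c:ℤ)*((q:ℤ)+1-(j:ℤ))) * (a1:ℤ) < ((l:ℤ) - (M:ℤ)) * (a1:ℤ) := by
        linarith only [hin2, hMleZ]
      have h9 := lt_of_mul_lt_mul_right hmul (le_of_lt ha1Z)
      omega
    -- lower bound on vertCount at f
    have hVc : l - M ≤ vertCount a1 a2 (Finset.Icc 1 a2) e f := by
      rw [vertCount_eq _ _ _ (by omega : e < f)]
      have hsub : Finset.Icc (M+1) l ⊆ (Finset.Icc 1 a2).filter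
          (fun x => vpos a1 a2 x ∈ Finset.Ioc e f) := by
        intro x hx
        rw [Finset.mem_Icc] at hx
        rw [Finset.mem_filter, Finset.mem_Icc, Finset.mem_Ioc]
        have hx1a : (j-1)*a2 < x*a1 := by
          have h1 : (M+1)*a1 ≤ x*a1 := Nat.mul_le_mul_right _ hx.1
          omega
        have hpv := hpos_lt_vpos ha1 ha2 hj1 hx1a
        rw [hP] at hpv
        refine ⟨⟨by omega, le_trans hx.2 hla2⟩, by omega, ?_⟩
        rcases Nat.eq_or_lt_of_le hx.2 with rfl | hxl
        · omega
        · have h9 := vpos_mono a1 a2 hxl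
          rw [hf] at h9
          omega
      calc l - M ≤ (Finset.Icc (M+1) l).card := by rw [Nat.card_Icc]; omega
        _ ≤ _ := Finset.card_le_card hsub
    -- upper bound on horCount S1 at f
    have hHc : horCount a1 a2 (Finset.Icc 1 q) e f ≤ q + 1 - j := by
      rw [horCount_eq _ _ _ (by omega : e < f)]
      have hsub : (Finset.Icc 1 q).filter
          (fun x => hpos a1 a2 x ∈ Finset.Ioc e f) ⊆ Finset.Icc j q := by
        intro x hx
        rw [Finset.mem_filter, Finset.mem_Icc, Finset.mem_Ioc] at hx
        rw [Finset.mem_Icc]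
        refine ⟨?_, hx.1.2⟩
        by_contra hxj
        have h9 : hpos a1 a2 x < hpos a1 a2 j := hpos_mono a1 a2 (by omega)
        rw [hP] at h9
        omega
      calc ((Finset.Icc 1 q).filter (fun x => hpos a1 a2 x ∈ Finset.Ioc e f)).card
          ≤ (Finset.Icc j q).card := Finset.card_le_card hsub
        _ = q + 1 - j := Nat.card_Icc _ _
    obtain ⟨h, hh⟩ : ∃ h : ℕ → ℤ, h = fun t =>
        (c:ℤ) * (horCount a1 a2 (Finset.Icc 1 q) e t : ℤ)
          - (vertCount a1 a2 (Finset.Icc 1 a2) e t : ℤ) := ⟨_, rfl⟩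
    have hht : ∀ t, h t = (c:ℤ) * (horCount a1 a2 (Finset.Icc 1 q) e t : ℤ)
          - (vertCount a1 a2 (Finset.Icc 1 a2) e t : ℤ) := by
      intro t; rw [hh]
    have hhe : 0 < h (e+1) := by
      rw [hht]
      have hV0 : vertCount a1 a2 (Finset.Icc 1 a2) e (e+1) = 0 := by
        rw [vertCount_eq _ _ _ (by omega : e < e+1)]
        rw [Finset.card_eq_zero, Finset.filter_eq_empty_iff]
        intro x hx
        rw [Finset.mem_Icc] at hx
        rw [Finset.mem_Ioc]
        intro hcon
        have hxe : vpos a1 a2 x = e + 1 := by omega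
        rcases Nat.lt_or_ge ((j-1)*a2) (x*a1) with hlt' | hge'
        · have h9 := hpos_lt_vpos ha1 ha2 hj1 hlt'
          rw [hP] at h9; omega
        · have h9 := vpos_lt_hpos ha1 ha2 hj1 hge'
          rw [hP] at h9; omega
      have hH1 : horCount a1 a2 (Finset.Icc 1 q) e (e+1) = 1 := by
        rw [horCount_eq _ _ _ (by omega : e < e+1)]
        have heq : (Finset.Icc 1 q).filter
            (fun x => hpos a1 a2 x ∈ Finset.Ioc e (e+1)) = {j} := by
          ext x
          rw [Finset.mem_filter, Finset.mem_Icc, Finset.mem_Ioc, Finset.mem_singleton]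
          constructor
          · rintro ⟨⟨hx1, hx2⟩, hx3, hx4⟩
            exact hinj_h (by rw [hP]; omega : hpos a1 a2 x = hpos a1 a2 j)
          · rintro rfl
            exact ⟨⟨hj1, hjq⟩, by omega, by omega⟩
        rw [heq, Finset.card_singleton]
      rw [hV0, hH1]
      simp only [Nat.cast_zero, Nat.cast_one, mul_one, sub_zero]
      exact_mod_cast hc
    have hhf : h f < 0 := by
      rw [hht]
      have h1 : ((l:ℤ) - (M:ℤ)) ≤ (vertCount a1 a2 (Finset.Icc 1 a2) e f : ℤ) := by
        have h9 := hVc; omega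
      have h2 : (horCount a1 a2 (Finset.Icc 1 q) e f : ℤ) ≤ (q:ℤ)+1-(j:ℤ) := by
        have h9 := hHc; omega
      have h3 : (c:ℤ) * (horCount a1 a2 (Finset.Icc 1 q) e f : ℤ)
          ≤ (c:ℤ) * ((q:ℤ)+1-(j:ℤ)) := mul_le_mul_of_nonneg_left h2 (by positivity)
      linarith only [hlMbig, h1, h3]
    have hstep : ∀ t, e+1 ≤ t → t < e+1 + (f - (e+1)) → h t - 1 ≤ h (t+1) := by
      intro t ht1 _
      rw [hht, hht]
      have h1 := count_step_le' hinj_v (S := Finset.Icc 1 a2) e t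
      have h2 := count_mono (S := Finset.Icc 1 q) (pf := hpos a1 a2)
        (Finset.Ioc_subset_Ioc (le_refl e) (by omega : t ≤ t+1))
      rw [horCount_eq _ _ _ (by omega : e < t), horCount_eq _ _ _ (by omega : e < t+1),
        vertCount_eq _ _ _ (by omega : e < t), vertCount_eq _ _ _ (by omega : e < t+1)]
      have hcnn : (0:ℤ) ≤ (c:ℤ) := by positivity
      have h2' : (((Finset.Icc 1 q).filter
            (fun x => hpos a1 a2 x ∈ Finset.Ioc e t)).card : ℤ)
          ≤ (((Finset.Icc 1 q).filter
            (fun x => hpos a1 a2 x ∈ Finset.Ioc e (t+1))).card : ℤ) := by exact_mod_cast h2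
      have h1' : (((Finset.Icc 1 a2).filter
            (fun x => vpos a1 a2 x ∈ Finset.Ioc e (t+1))).card : ℤ)
          ≤ (((Finset.Icc 1 a2).filter
            (fun x => vpos a1 a2 x ∈ Finset.Ioc e t)).card : ℤ) + 1 := by
        exact_mod_cast h1
      linarith only [h1', mul_le_mul_of_nonneg_left h2' hcnn]
    obtain ⟨t, ht1, ht2, ht3⟩ := ivt h (f - (e+1)) (e+1) hhe
      (by rw [show e+1 + (f-(e+1)) = f by omega]; exact hhf) hstep
    refine ⟨t, ?_, Or.inr ?_⟩
    · unfold interiorPos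
      rw [if_pos (by omega : e < f)]
      rw [Finset.mem_Ioo]
      exact ⟨by omega, by omega⟩
    · rw [hht] at ht3
      omega
end

section
/- With b ≥ c ≥ 1, bc > 4 and the sequences α, β as defined: (i) β(k) > δ(b,c) for every k ≥ 0; (ii) β(k) > 2·δ(b,c) for every k ≥ 1 if c > 1, and for every k ≥ 2 if c = 1. Consequently: (α(k-1) - 1)·β(k) < α(k)·β(k-1) for every k ≥ 0 (the point (α(k), α(k-1)-1) lies strictly below the diagonal from (0,0) to (β(k), β(k-1))); α(k-1)·β(k) < (α(k)+1)·β(k-1) for every k ≥ 1; and (2·α(k-1) - 1)·β(k) < 2·α(k)·β(k-1) for every k ≥ 1 if c > 1 and every k ≥ 2 if c = 1. -/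
/-- `r_k`: equals `b` for odd `k` and `c` for even `k`. -/
def rr (b c : ℕ) (k : ℤ) : ℕ := if Odd k then b else c

/-- `δ(b,c) = bc - b - c` if `c > 1`, and `b - 4` if `c = 1`. -/
def dlt (b c : ℕ) : ℤ :=
  if 1 < c then (b : ℤ) * c - (b : ℤ) - (c : ℤ) else (b : ℤ) - 4

set_option maxHeartbeats 1600000 in
/-- With `b ≥ c ≥ 1`, `bc > 4` and the sequences `α, β` as
defined: `β(k) > δ(b,c)` for `k ≥ 0`; `β(k) > 2δ(b,c)` for `k ≥ 1` if `c > 1` and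
for `k ≥ 2` if `c = 1`; consequently `(α(k-1)-1)·β(k) < α(k)·β(k-1)` for `k ≥ 0`,
`α(k-1)·β(k) < (α(k)+1)·β(k-1)` for `k ≥ 1`, and
`(2α(k-1)-1)·β(k) < 2α(k)·β(k-1)` for `k ≥ 1` if `c > 1` resp. `k ≥ 2` if `c = 1`. -/
theorem statement9 (b c : ℕ) (hc : 1 ≤ c) (hcb : c ≤ b) (hbc : 4 < b * c)
    (α β γ : ℤ → ℤ)
    (hαrec : ∀ k : ℤ, α k = (rr b c (k - 1) : ℤ) * α (k - 1) - α (k - 2))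
    (hβrec : ∀ k : ℤ, β k = (rr b c (k - 1) : ℤ) * β (k - 1) - β (k - 2))
    (hγrec : ∀ k : ℤ, γ k = (rr b c (k - 1) : ℤ) * γ (k - 1) - γ (k - 2))
    (hα0 : α 0 = if 1 < c then 1 else 2)
    (hα1 : α (-1) = 1)
    (hβ0 : β 0 = if 1 < c then ((c : ℤ) - 1) * b + 1 else (b : ℤ) + 2)
    (hβ1 : β (-1) = if 1 < c then (c : ℤ) + 1 else 3)
    (hγ0 : γ 0 = if 1 < c then (b : ℤ) + 1 else (b : ℤ) + 2)
    (hγ1 : γ (-1) = if 1 < c then ((b : ℤ) - 1) * c + 1 else (b : ℤ) - 1)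
 :
    (∀ k : ℤ, 0 ≤ k → dlt b c < β k) ∧
    (1 < c → ∀ k : ℤ, 1 ≤ k → 2 * dlt b c < β k) ∧
    (c = 1 → ∀ k : ℤ, 2 ≤ k → 2 * dlt b c < β k) ∧
    (∀ k : ℤ, 0 ≤ k → (α (k - 1) - 1) * β k < α k * β (k - 1)) ∧
    (∀ k : ℤ, 1 ≤ k → α (k - 1) * β k < (α k + 1) * β (k - 1)) ∧
    (1 < c → ∀ k : ℤ, 1 ≤ k → (2 * α (k - 1) - 1) * β k < 2 * α k * β (k - 1)) ∧
    (c = 1 → ∀ k : ℤ, 2 ≤ k → (2 * α (k - 1) - 1) * β k < 2 * α k * β (k - 1)) := by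
  clear hγrec hγ0 hγ1
  -- shifted recurrences
  have hrecβ : ∀ m : ℤ, β (m + 1) = (rr b c m : ℤ) * β m - β (m - 1) := by
    intro m
    have h := hβrec (m + 1)
    have e1 : m + 1 - 1 = m := by ring
    have e2 : m + 1 - 2 = m - 1 := by ring
    rw [e1, e2] at h
    exact h
  have hrecα : ∀ m : ℤ, α (m + 1) = (rr b c m : ℤ) * α m - α (m - 1) := by
    intro m
    have h := hαrec (m + 1)
    have e1 : m + 1 - 1 = m := by ring
    have e2 : m + 1 - 2 = m - 1 := by ring
    rw [e1, e2] at h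
    exact h
  -- the "Wronskian" is constant, equal to `-δ`
  have Wnat : ∀ n : ℕ, α n * β ((n : ℤ) - 1) - α ((n : ℤ) - 1) * β n = -dlt b c := by
    intro n
    induction n with
    | zero =>
      norm_num
      by_cases h : 1 < c
      · rw [hα0, hα1, hβ0, hβ1, dlt, if_pos h, if_pos h, if_pos h, if_pos h]
        ring
      · rw [hα0, hα1, hβ0, hβ1, dlt, if_neg h, if_neg h, if_neg h, if_neg h]
        ring
    | succ n ih =>
      push_cast
      have e : (n : ℤ) + 1 - 1 = (n : ℤ) := by ring
      rw [e, hrecα (n : ℤ), hrecβ (n : ℤ)]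
      linear_combination ih
  have Wk : ∀ k : ℤ, 0 ≤ k → α k * β (k - 1) - α (k - 1) * β k = -dlt b c := by
    intro k hk
    lift k to ℕ using hk
    exact Wnat k
  -- the three β lower bounds
  have key : (∀ k : ℤ, 0 ≤ k → dlt b c < β k) ∧
      (1 < c → ∀ k : ℤ, 1 ≤ k → 2 * dlt b c < β k) ∧
      (c = 1 → ∀ k : ℤ, 2 ≤ k → 2 * dlt b c < β k) := by
    by_cases hc1 : 1 < c
    · -- case c > 1
      have hd : dlt b c = (b : ℤ) * c - b - c := if_pos hc1
      have hb0 : β 0 = ((c : ℤ) - 1) * b + 1 := by rw [hβ0, if_pos hc1]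
      have hb1 : β (-1) = (c : ℤ) + 1 := by rw [hβ1, if_pos hc1]
      have hc2 : 2 ≤ c := hc1
      have hb3 : 3 ≤ b := by nlinarith
      have hr2 : ∀ m : ℤ, 2 ≤ (rr b c m : ℤ) := by
        intro m
        unfold rr
        split_ifs <;> push_cast <;> omega
      have hcz : (2 : ℤ) ≤ (c : ℤ) := by exact_mod_cast hc2
      have hbz : (3 : ℤ) ≤ (b : ℤ) := by exact_mod_cast hb3
      have hβone : β 1 = (c : ℤ) * (((c : ℤ) - 1) * b + 1) - ((c:ℤ) + 1) := by
        have h := hrecβ 0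
        norm_num at h
        rw [show (rr b c 0 : ℤ) = (c : ℤ) from by
          rw [rr, if_neg (by rw [Int.odd_iff]; omega)]] at h
        rw [hb0, hb1] at h
        exact h
      have T : ∀ n : ℕ, 0 < β n ∧ β 0 ≤ β n ∧ β 1 ≤ β ((n:ℤ) + 1) ∧ β n ≤ β ((n:ℤ) + 1) := by
        intro n
        induction n with
        | zero =>
          simp only [Nat.cast_zero, zero_add]
          exact ⟨by rw [hb0]; nlinarith, le_refl _, le_refl _, by
            rw [hb0, hβone]
            nlinarith [mul_nonneg (show (0:ℤ) ≤ ((c:ℤ)-1)*((c:ℤ)-1)-1 from by nlinarith)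
              (show (0:ℤ) ≤ (b:ℤ) from by linarith)]⟩
        | succ n ih =>
          obtain ⟨h1, h2, h3, h4⟩ := ih
          have hrec := hrecβ ((n : ℤ) + 1)
          rw [show (n : ℤ) + 1 - 1 = (n : ℤ) from by ring] at hrec
          have hr := hr2 ((n : ℤ) + 1)
          push_cast
          have hstep : β ((n:ℤ) + 1) ≤ β ((n:ℤ) + 1 + 1) := by
            rw [hrec]
            nlinarith [mul_nonneg (by linarith : (0:ℤ) ≤ (rr b c ((n:ℤ)+1) : ℤ) - 2)
              (by linarith : (0:ℤ) ≤ β ((n:ℤ) + 1))]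
          exact ⟨by linarith, by linarith, by linarith, hstep⟩
      refine ⟨?_, ?_, fun h => absurd h (by omega)⟩
      · intro k hk
        lift k to ℕ using hk
        have := (T k).2.1
        rw [hd, hb0] at *
        nlinarith
      · intro _ k hk
        have hn : (((k - 1).toNat : ℕ) : ℤ) = k - 1 := Int.toNat_of_nonneg (by omega)
        have t := (T (k - 1).toNat).2.2.1
        rw [hn, show k - 1 + 1 = k from by ring] at t
        rw [hd]
        nlinarith [t, hβone, mul_nonneg (mul_nonneg (show (0:ℤ) ≤ (b:ℤ) from by linarith)
          (show (0:ℤ) ≤ (c:ℤ) - 1 from by linarith)) (show (0:ℤ) ≤ (c:ℤ) - 2 from by linarith)]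
    · -- case c = 1
      have hc' : c = 1 := by omega
      subst hc'
      have hd : dlt b 1 = (b : ℤ) - 4 := by rw [dlt, if_neg (by norm_num)]
      have hb0 : β 0 = (b : ℤ) + 2 := by rw [hβ0, if_neg (by norm_num)]
      have hb1 : β (-1) = 3 := by rw [hβ1, if_neg (by norm_num)]
      have hb5 : 5 ≤ b := by omega
      have hbz : (5 : ℤ) ≤ (b : ℤ) := by exact_mod_cast hb5
      have rrE : ∀ m : ℤ, ¬ Odd m → (rr b 1 m : ℤ) = 1 := by
        intro m hm; rw [rr, if_neg hm]; norm_num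
      have rrO : ∀ m : ℤ, Odd m → (rr b 1 m : ℤ) = (b : ℤ) := by
        intro m hm; rw [rr, if_pos hm]
      have hOdd : ∀ m : ℤ, β (2 * m + 1) = β (2 * m) - β (2 * m - 1) := by
        intro m
        have h := hrecβ (2 * m)
        rw [rrE (2 * m) (by rw [Int.odd_iff]; omega)] at h
        rw [h]; ring
      have hEven : ∀ m : ℤ, β (2 * m + 2) = (b : ℤ) * β (2 * m + 1) - β (2 * m) := by
        intro m
        have h := hrecβ (2 * m + 1)
        rw [rrO (2 * m + 1) (by rw [Int.odd_iff]; omega)] at h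
        rw [show 2 * m + 1 + 1 = 2 * m + 2 from by ring,
          show 2 * m + 1 - 1 = 2 * m from by ring] at h
        exact h
      have hβone : β 1 = (b : ℤ) - 1 := by
        have h := hOdd 0
        norm_num at h
        rw [hb0, hb1] at h
        rw [h]; ring
      have hβtwo : β 2 = (b : ℤ) * ((b : ℤ) - 1) - ((b : ℤ) + 2) := by
        have h := hEven 0
        norm_num at h
        rw [hβone, hb0] at h
        exact h
      have P : ∀ n : ℕ, ((b:ℤ) - 1 ≤ β (2 * (n:ℤ) + 1)) ∧
          ((b:ℤ) - 2) * β (2 * (n:ℤ) + 1) ≤ β (2 * (n:ℤ) + 2) := by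
        intro n
        induction n with
        | zero =>
          norm_num
          rw [hβone, hβtwo]
          constructor
          · linarith
          · nlinarith
        | succ n ih =>
          obtain ⟨hx, hy⟩ := ih
          have hx' : β (2 * (n:ℤ) + 3) = β (2 * (n:ℤ) + 2) - β (2 * (n:ℤ) + 1) := by
            have h := hOdd ((n:ℤ) + 1)
            rw [show 2 * ((n:ℤ) + 1) + 1 = 2 * (n:ℤ) + 3 from by ring,
              show 2 * ((n:ℤ) + 1) = 2 * (n:ℤ) + 2 from by ring,
              show 2 * (n:ℤ) + 2 - 1 = 2 * (n:ℤ) + 1 from by ring] at h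
            exact h
          have hy' : β (2 * (n:ℤ) + 4) = (b:ℤ) * β (2 * (n:ℤ) + 3) - β (2 * (n:ℤ) + 2) := by
            have h := hEven ((n:ℤ) + 1)
            rw [show 2 * ((n:ℤ) + 1) + 2 = 2 * (n:ℤ) + 4 from by ring,
              show 2 * ((n:ℤ) + 1) + 1 = 2 * (n:ℤ) + 3 from by ring,
              show 2 * ((n:ℤ) + 1) = 2 * (n:ℤ) + 2 from by ring] at h
            exact h
          have e1 : 2 * (((n:ℕ)+1:ℕ):ℤ) + 1 = 2 * (n:ℤ) + 3 := by push_cast; ring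
          have e2 : 2 * (((n:ℕ)+1:ℕ):ℤ) + 2 = 2 * (n:ℤ) + 4 := by push_cast; ring
          rw [e1, e2, hx', hy']
          constructor
          · nlinarith [mul_nonneg (show (0:ℤ) ≤ (b:ℤ) - 3 from by linarith)
              (show (0:ℤ) ≤ β (2 * (n:ℤ) + 1) - ((b:ℤ) - 1) from by linarith),
              mul_nonneg (show (0:ℤ) ≤ (b:ℤ) - 4 from by linarith)
              (show (0:ℤ) ≤ (b:ℤ) - 1 from by linarith)]
          · nlinarith [mul_nonneg (show (0:ℤ) ≤ (b:ℤ) - 4 from by linarith)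
              (show (0:ℤ) ≤ β (2 * (n:ℤ) + 1) from by linarith)]
      have h2d : ∀ k : ℤ, 2 ≤ k → 2 * ((b:ℤ) - 4) < β k := by
        intro k hk
        rcases Int.even_or_odd k with ⟨m, hm⟩ | ⟨m, hm⟩
        · have hm1 : 1 ≤ m := by omega
          have hn : (((m - 1).toNat : ℕ) : ℤ) = m - 1 := Int.toNat_of_nonneg (by omega)
          obtain ⟨hx, hy⟩ := P (m - 1).toNat
          rw [hn] at hx hy
          rw [show 2 * (m - 1) + 1 = k - 1 from by omega] at hx
          rw [show 2 * (m - 1) + 2 = k from by omega,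
            show 2 * (m - 1) + 1 = k - 1 from by omega] at hy
          nlinarith [mul_nonneg (show (0:ℤ) ≤ (b:ℤ) - 2 from by linarith)
            (show (0:ℤ) ≤ β (k - 1) - ((b:ℤ) - 1) from by linarith)]
        · have hm1 : 1 ≤ m := by omega
          have hn : (((m - 1).toNat : ℕ) : ℤ) = m - 1 := Int.toNat_of_nonneg (by omega)
          obtain ⟨hx, hy⟩ := P (m - 1).toNat
          rw [hn] at hx hy
          rw [show 2 * (m - 1) + 1 = 2 * m - 1 from by ring] at hx
          rw [show 2 * (m - 1) + 2 = 2 * m from by ring,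
            show 2 * (m - 1) + 1 = 2 * m - 1 from by ring] at hy
          have hk2 : β k = β (2 * m) - β (2 * m - 1) := by
            rw [hm]; exact hOdd m
          rw [hk2]
          nlinarith [mul_nonneg (show (0:ℤ) ≤ (b:ℤ) - 3 from by linarith)
            (show (0:ℤ) ≤ β (2 * m - 1) - ((b:ℤ) - 1) from by linarith),
            mul_nonneg (show (0:ℤ) ≤ (b:ℤ) - 4 from by linarith)
            (show (0:ℤ) ≤ (b:ℤ) - 1 from by linarith)]
      refine ⟨?_, fun h => absurd h (by omega), ?_⟩
      · intro k hk
        rw [hd]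
        by_cases h0 : k = 0
        · rw [h0, hb0]; linarith
        by_cases h1 : k = 1
        · rw [h1, hβone]; linarith
        · have h2 : 2 ≤ k := by omega
          have := h2d k h2
          linarith
      · intro _ k hk
        rw [hd]
        exact h2d k hk
  obtain ⟨A, B, C⟩ := key
  refine ⟨A, B, C, ?_, ?_, ?_, ?_⟩
  · intro k hk
    nlinarith [Wk k hk, A k hk]
  · intro k hk
    nlinarith [Wk k (by omega), A (k - 1) (by omega)]
  · intro h k hk
    nlinarith [Wk k (by omega), B h k hk]
  · intro h k hk
    nlinarith [Wk k (by omega), C h k hk]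
end

section
/- Let b,c be positive integers. For (a1,a2) ∈ ℤ^2 define a(-1) = a2, a(0) = a1, and a(k) = r_{k-1}·a(k-1) - a(k-2) for k > 0. Let w(1;0) be the identity matrix and w(1;k) = s_{[k]}···s1·s2·s1 be the alternating product of k factors whose rightmost factor is s1 (so w(1;1) = s1, w(1;2) = s2·s1, w(1;3) = s1·s2·s1, …). Then for every k ≥ 0: w(1;k)·(a1,a2) = (a(k-1), a(k)) if k is odd, and w(1;k)·(a1,a2) = (a(k), a(k-1)) if k is even. -/
/-- For the sequence `a(-1) = a2`, `a(0) = a1`,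
`a(k) = r_{k-1}·a(k-1) - a(k-2)` (`k > 0`), and the alternating products
`w(1;0) = 1`, `w(1;k+1) = s_{[k+1]}·w(1;k)` (leftmost factor `s1` for odd length,
`s2` for even length; rightmost factor `s1`), one has
`w(1;k)·(a1,a2) = (a(k-1), a(k))` for odd `k` and `= (a(k), a(k-1))` for even `k`. -/
theorem statement11 (b c : ℕ) (hb : 0 < b) (hc : 0 < c) (a1 a2 : ℤ)
    (a : ℤ → ℤ) (ham : a (-1) = a2) (ha0 : a 0 = a1)
    (harec : ∀ k : ℤ, 0 < k → a k = (rr b c (k - 1) : ℤ) * a (k - 1) - a (k - 2))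
    (s1 s2 : Matrix (Fin 2) (Fin 2) ℤ)
    (hs1 : s1 = !![1, 0; (c : ℤ), -1]) (hs2 : s2 = !![-1, (b : ℤ); 0, 1])
    (w : ℕ → Matrix (Fin 2) (Fin 2) ℤ) (hw0 : w 0 = 1)
    (hwsucc : ∀ k : ℕ, w (k + 1) = (if Odd (k + 1) then s1 else s2) * w k) :
    ∀ k : ℕ,
      (Odd k → (w k).mulVec ![a1, a2] = ![a ((k : ℤ) - 1), a (k : ℤ)]) ∧
      (Even k → (w k).mulVec ![a1, a2] = ![a (k : ℤ), a ((k : ℤ) - 1)]) := by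
  intro k
  induction k with
  | zero =>
    refine ⟨fun h => by simp at h, fun _ => ?_⟩
    simp [hw0, Matrix.one_mulVec, ha0, ham]
  | succ k ih =>
    have hrec := harec (k + 1) (by positivity)
    have hk1 : ((k : ℤ) + 1) - 1 = (k : ℤ) := by ring
    have hk2 : ((k : ℤ) + 1) - 2 = (k : ℤ) - 1 := by ring
    rcases Nat.even_or_odd k with hk | hk
    · -- k even, k+1 odd
      have hodd : Odd (k + 1) := hk.add_one
      have hv := ih.2 hk
      refine ⟨fun _ => ?_, fun h => absurd h (Nat.not_even_iff_odd.mpr hodd)⟩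
      rw [hwsucc k, if_pos hodd, ← Matrix.mulVec_mulVec, hv]
      have hr : rr b c (k : ℤ) = c := by
        simp [rr, Int.odd_coe_nat, Nat.not_odd_iff_even.mpr hk]
      rw [hk1, hk2, hr] at hrec
      push_cast
      rw [hk1, hrec]
      funext i
      fin_cases i <;>
        simp [hs1, Matrix.mulVec, dotProduct, Fin.sum_univ_two] <;> ring
    · -- k odd, k+1 even
      have heven : Even (k + 1) := Odd.add_one hk
      have hv := ih.1 hk
      refine ⟨fun h => absurd heven (Nat.not_even_iff_odd.mpr h), fun _ => ?_⟩
      rw [hwsucc k, if_neg (Nat.not_odd_iff_even.mpr heven), ← Matrix.mulVec_mulVec, hv]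
      have hr : rr b c (k : ℤ) = b := by
        simp [rr, Int.odd_coe_nat, hk]
      rw [hk1, hk2, hr] at hrec
      push_cast
      rw [hk1, hrec]
      funext i
      fin_cases i <;>
        simp [hs2, Matrix.mulVec, dotProduct, Fin.sum_univ_two] <;> ring
end

section
/- With b ≥ c ≥ 1, bc > 4 and the sequences α, β, γ as defined: δ(b,c) > 0, and for every integer k, α(k-1)·β(k) - α(k)·β(k-1) = α(k)·γ(k-1) - α(k-1)·γ(k) = r_{k-1}·α(k-1)·α(k+1) - r_k·α(k)^2 = bc·α(k-1)·α(k) - r_{k-1}·α(k-1)^2 - r_k·α(k)^2 = δ(b,c). Moreover α(k) < β(k) for every integer k ≥ 0. -/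
private lemma constZ' (f : ℤ → ℤ) (h : ∀ k, f (k + 1) = f k) : ∀ k, f k = f 0 := by
  intro k
  induction k using Int.induction_on with
  | zero => rfl
  | succ n ih => rw [h]; exact ih
  | pred n ih => rw [← ih, ← h (-(n:ℤ) - 1)]; norm_num

private lemma twoStep' {P : ℕ → Prop} (h0 : P 0) (h1 : P 1) (hs : ∀ n, P n → P (n + 2)) :
    ∀ n, P n := by
  have key : ∀ n, P n ∧ P (n + 1) := by
    intro n
    induction n with
    | zero => exact ⟨h0, h1⟩
    | succ m ih => exact ⟨ih.2, hs m ih.1⟩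
  exact fun n => (key n).1

private lemma rr_prod (b c : ℕ) : ∀ k : ℤ, (rr b c (k - 1) : ℤ) * rr b c k = (b : ℤ) * c := by
  intro k
  have hpar : Odd (k - 1) ↔ ¬ Odd k := by rw [Int.odd_iff, Int.odd_iff]; omega
  by_cases h : Odd k
  · simp [rr, h, hpar.not_left.mpr (by simpa using h), mul_comm]
  · simp [rr, h, hpar.mpr h]

private lemma rr_shift (b c : ℕ) : ∀ k : ℤ, rr b c (k + 1) = rr b c (k - 1) := by
  intro k
  have hpar : Odd (k + 1) ↔ Odd (k - 1) := by rw [Int.odd_iff, Int.odd_iff]; omega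
  by_cases h : Odd (k + 1)
  · simp [rr, h, hpar.mp h]
  · have h2 : ¬ Odd (k - 1) := fun hh => h (hpar.mpr hh)
    simp [rr, h, h2]

private lemma rr_neg_one (b c : ℕ) : rr b c (-1) = b := by
  simp [rr, Int.odd_iff]

private lemma rr_zero (b c : ℕ) : rr b c 0 = c := by
  simp [rr, Int.odd_iff]

private lemma rr_one (b c : ℕ) : rr b c 1 = b := by
  simp [rr, Int.odd_iff]

private lemma rr_two (b c : ℕ) : rr b c 2 = c := by
  simp [rr, Int.odd_iff]

set_option maxHeartbeats 1000000 in
/-- With `b ≥ c ≥ 1`, `bc > 4` and the sequences `α, β, γ` as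
defined: `δ(b,c) > 0`, and for every integer `k`,
`α(k-1)β(k) - α(k)β(k-1) = α(k)γ(k-1) - α(k-1)γ(k)
 = r_{k-1}·α(k-1)·α(k+1) - r_k·α(k)² = bc·α(k-1)·α(k) - r_{k-1}·α(k-1)² - r_k·α(k)²
 = δ(b,c)`; moreover `α(k) < β(k)` for all `k ≥ 0`. -/
theorem statement13 (b c : ℕ) (hc : 1 ≤ c) (hcb : c ≤ b) (hbc : 4 < b * c)
    (α β γ : ℤ → ℤ)
    (hαrec : ∀ k : ℤ, α k = (rr b c (k - 1) : ℤ) * α (k - 1) - α (k - 2))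
    (hβrec : ∀ k : ℤ, β k = (rr b c (k - 1) : ℤ) * β (k - 1) - β (k - 2))
    (hγrec : ∀ k : ℤ, γ k = (rr b c (k - 1) : ℤ) * γ (k - 1) - γ (k - 2))
    (hα0 : α 0 = if 1 < c then 1 else 2)
    (hα1 : α (-1) = 1)
    (hβ0 : β 0 = if 1 < c then ((c : ℤ) - 1) * b + 1 else (b : ℤ) + 2)
    (hβ1 : β (-1) = if 1 < c then (c : ℤ) + 1 else 3)
    (hγ0 : γ 0 = if 1 < c then (b : ℤ) + 1 else (b : ℤ) + 2)
    (hγ1 : γ (-1) = if 1 < c then ((b : ℤ) - 1) * c + 1 else (b : ℤ) - 1)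
 :
    0 < dlt b c ∧
    (∀ k : ℤ,
      α (k - 1) * β k - α k * β (k - 1) = dlt b c ∧
      α k * γ (k - 1) - α (k - 1) * γ k = dlt b c ∧
      (rr b c (k - 1) : ℤ) * α (k - 1) * α (k + 1) - (rr b c k : ℤ) * α k ^ 2
          = dlt b c ∧
      (b : ℤ) * c * α (k - 1) * α k - (rr b c (k - 1) : ℤ) * α (k - 1) ^ 2
          - (rr b c k : ℤ) * α k ^ 2 = dlt b c) ∧
    (∀ k : ℤ, 0 ≤ k → α k < β k) := by
  -- clean recurrences
  have hα : ∀ k : ℤ, α (k + 1) = (rr b c k : ℤ) * α k - α (k - 1) := by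
    intro k
    have h := hαrec (k + 1)
    rw [show k + 1 - 1 = k from by ring, show k + 1 - 2 = k - 1 from by ring] at h
    exact h
  have hβ : ∀ k : ℤ, β (k + 1) = (rr b c k : ℤ) * β k - β (k - 1) := by
    intro k
    have h := hβrec (k + 1)
    rw [show k + 1 - 1 = k from by ring, show k + 1 - 2 = k - 1 from by ring] at h
    exact h
  have hγ : ∀ k : ℤ, γ (k + 1) = (rr b c k : ℤ) * γ k - γ (k - 1) := by
    intro k
    have h := hγrec (k + 1)
    rw [show k + 1 - 1 = k from by ring, show k + 1 - 2 = k - 1 from by ring] at h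
    exact h
  -- invariants
  have hW : ∀ k : ℤ, α (k - 1) * β k - α k * β (k - 1) = α (-1) * β 0 - α 0 * β (-1) := by
    have := constZ' (fun k => α (k - 1) * β k - α k * β (k - 1)) (by
      intro k
      simp only [add_sub_cancel_right]
      rw [hα k, hβ k]; ring)
    intro k
    have h := this k
    norm_num at h
    exact h
  have hG : ∀ k : ℤ, α k * γ (k - 1) - α (k - 1) * γ k = α 0 * γ (-1) - α (-1) * γ 0 := by
    have := constZ' (fun k => α k * γ (k - 1) - α (k - 1) * γ k) (by
      intro k
      simp only [add_sub_cancel_right]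
      rw [hα k, hγ k]; ring)
    intro k
    have h := this k
    norm_num at h
    exact h
  have hF : ∀ k : ℤ, (b : ℤ) * c * α (k - 1) * α k - (rr b c (k - 1) : ℤ) * α (k - 1) ^ 2
      - (rr b c k : ℤ) * α k ^ 2
      = (b : ℤ) * c * α (-1) * α 0 - (b : ℤ) * α (-1) ^ 2 - (c : ℤ) * α 0 ^ 2 := by
    have := constZ' (fun k => (b : ℤ) * c * α (k - 1) * α k - (rr b c (k - 1) : ℤ) * α (k - 1) ^ 2
        - (rr b c k : ℤ) * α k ^ 2) (by
      intro k
      simp only [add_sub_cancel_right]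
      rw [rr_shift b c k, hα k]
      have hp := rr_prod b c k
      linear_combination (2 * α k * α (k - 1) - (rr b c k : ℤ) * α k ^ 2) * hp)
    intro k
    have h := this k
    norm_num [rr_neg_one, rr_zero] at h
    exact h
  have hTF : ∀ k : ℤ, (rr b c (k - 1) : ℤ) * α (k - 1) * α (k + 1) - (rr b c k : ℤ) * α k ^ 2
      = (b : ℤ) * c * α (k - 1) * α k - (rr b c (k - 1) : ℤ) * α (k - 1) ^ 2
        - (rr b c k : ℤ) * α k ^ 2 := by
    intro k
    rw [hα k]
    linear_combination (α (k - 1) * α k) * rr_prod b c k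
  -- values of the invariants
  have hbcZ : (5 : ℤ) ≤ (b : ℤ) * c := by exact_mod_cast hbc
  have hcbZ : (c : ℤ) ≤ b := by exact_mod_cast hcb
  have hW0 : α (-1) * β 0 - α 0 * β (-1) = dlt b c := by
    by_cases h : 1 < c
    · simp only [hα0, hα1, hβ0, hβ1, dlt, if_pos h]; ring
    · simp only [hα0, hα1, hβ0, hβ1, dlt, if_neg h]; ring
  have hG0 : α 0 * γ (-1) - α (-1) * γ 0 = dlt b c := by
    by_cases h : 1 < c
    · simp only [hα0, hα1, hγ0, hγ1, dlt, if_pos h]; ring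
    · simp only [hα0, hα1, hγ0, hγ1, dlt, if_neg h]; ring
  have hF0 : (b : ℤ) * c * α (-1) * α 0 - (b : ℤ) * α (-1) ^ 2 - (c : ℤ) * α 0 ^ 2
      = dlt b c := by
    by_cases h : 1 < c
    · simp only [hα0, hα1, dlt, if_pos h]; ring
    · have hc1 : c = 1 := by omega
      simp only [hα0, hα1, dlt, if_neg h, hc1]; push_cast; ring
  have hdlt : 0 < dlt b c := by
    by_cases h : 1 < c
    · have h2 : (2 : ℤ) ≤ c := by exact_mod_cast h
      rw [dlt, if_pos h]
      nlinarith
    · have hc1 : c = 1 := by omega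
      rw [dlt, if_neg h]
      have : (5 : ℤ) ≤ (b : ℤ) := by
        have := hbcZ; rw [hc1] at this; push_cast at this; linarith
      linarith
  -- positivity of β - α
  obtain ⟨D, hDdef⟩ : ∃ D : ℤ → ℤ, ∀ k, D k = β k - α k := ⟨_, fun _ => rfl⟩
  have hDrec : ∀ k : ℤ, D (k + 1) = (rr b c k : ℤ) * D k - D (k - 1) := by
    intro k
    rw [hDdef, hDdef, hDdef, hα k, hβ k]; ring
  have hD2 : ∀ k : ℤ, D (k + 2) = ((b : ℤ) * c - 2) * D k - D (k - 2) := by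
    intro k
    have h1 := hDrec (k + 1)
    rw [show k + 1 + 1 = k + 2 from by ring, show k + 1 - 1 = k from by ring,
      rr_shift b c k] at h1
    have h2 := hDrec k
    have h3 := hDrec (k - 1)
    rw [show k - 1 + 1 = k from by ring, show k - 1 - 1 = k - 2 from by ring] at h3
    have hp := rr_prod b c k
    rw [h1, h2]
    linear_combination (D k : ℤ) * hp + h3
  -- base values of D
  have hD1 : D 1 = (c : ℤ) * D 0 - D (-1) := by
    have h := hDrec 0
    norm_num [rr_zero] at h
    exact h
  have hD2v : D 2 = (b : ℤ) * D 1 - D 0 := by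
    have h := hDrec 1
    norm_num [rr_one] at h
    exact h
  have hD3v : D 3 = (c : ℤ) * D 2 - D 1 := by
    have h := hDrec 2
    norm_num [rr_two] at h
    exact h
  have hbase : (0 < D 0 ∧ D 0 ≤ D 2) ∧ (0 < D 1 ∧ D 1 ≤ D 3) := by
    have hDm1 : D (-1) = β (-1) - α (-1) := hDdef _
    have hD0 : D 0 = β 0 - α 0 := hDdef _
    by_cases h : 1 < c
    · have h2 : (2 : ℤ) ≤ c := by exact_mod_cast h
      have hb3 : (3 : ℤ) ≤ b := by nlinarith
      simp only [hβ0, hβ1, hα0, hα1, if_pos h] at hD0 hDm1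
      have hB0 : (0:ℤ) ≤ b := by linarith
      have hC0 : (0:ℤ) ≤ c := by linarith
      have hB3' : (0:ℤ) ≤ (b:ℤ) - 3 := by linarith
      have hC2' : (0:ℤ) ≤ (c:ℤ) - 2 := by linarith
      have hC1' : (0:ℤ) ≤ (c:ℤ) - 1 := by linarith
      have f1 : (0:ℤ) < b := by linarith
      have g2 : (0:ℤ) < (b:ℤ)*c*((c:ℤ)-1) - 3*c + 2 := by
        nlinarith [mul_nonneg (mul_nonneg hB0 hC0) hC2', mul_nonneg hB3' hC0]
      have g4 : (0:ℤ) ≤ (b:ℤ)*c*((c:ℤ)-1) - 4*c + 3 := by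
        nlinarith [mul_nonneg (mul_nonneg hB3' hC0) hC1', sq_nonneg ((c:ℤ)-2)]
      refine ⟨⟨?_, ?_⟩, ⟨?_, ?_⟩⟩
      · rw [hD0]; nlinarith
      · rw [hD2v, hD1, hD0, hDm1]; nlinarith [mul_pos f1 g2]
      · rw [hD1, hD0, hDm1]; nlinarith
      · rw [hD3v, hD2v, hD1, hD0, hDm1]
        nlinarith [mul_nonneg hC0 (mul_nonneg hB0 g4)]
    · have hc1 : c = 1 := by omega
      have hb5 : (5 : ℤ) ≤ b := by
        have := hbcZ; rw [hc1] at this; push_cast at this; linarith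
      simp only [hβ0, hβ1, hα0, hα1, if_neg h] at hD0 hDm1
      have hcZ : (c : ℤ) = 1 := by exact_mod_cast hc1
      refine ⟨⟨?_, ?_⟩, ⟨?_, ?_⟩⟩
      · rw [hD0]; linarith
      · rw [hD2v, hD1, hD0, hDm1, hcZ]; nlinarith
      · rw [hD1, hD0, hDm1, hcZ]; linarith
      · rw [hD3v, hD2v, hD1, hD0, hDm1, hcZ]; nlinarith
  have hPos : ∀ n : ℕ, 0 < D n ∧ D ((n : ℤ)) ≤ D ((n : ℤ) + 2) := by
    apply twoStep'
    · simpa using hbase.1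
    · have := hbase.2
      push_cast
      norm_num
      exact this
    · intro n ih
      obtain ⟨h1, h2⟩ := ih
      have hstep := hD2 ((n : ℤ) + 2)
      rw [show (n : ℤ) + 2 + 2 = (n : ℤ) + 4 from by ring,
        show (n : ℤ) + 2 - 2 = (n : ℤ) from by ring] at hstep
      constructor
      · push_cast
        linarith
      · push_cast
        rw [show (n : ℤ) + 2 + 2 = (n : ℤ) + 4 from by ring, hstep]
        nlinarith
  refine ⟨hdlt, ?_, ?_⟩
  · intro k
    refine ⟨by rw [hW k, hW0], by rw [hG k, hG0], ?_, by rw [hF k, hF0]⟩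
    rw [hTF k, hF k, hF0]
  · intro k hk
    lift k to ℕ using hk
    have := (hPos k).1
    rw [hDdef] at this
    linarith
end

section
/- With b ≥ c ≥ 1, bc > 4 and the sequences α, β as defined, assume k ≥ 1 if c > 1 and k ≥ 2 if c = 1. Then there is no lattice point (i,j) ∈ ℤ^2 with 0 < i < 2·α(k), β(k-1)·i < β(k)·j, and α(k)·j < α(k-1)·i. (Equivalently, no lattice point lies strictly inside the triangle cut out between the ray from the origin through (β(k), β(k-1)), the ray from the origin through (α(k), α(k-1)), and the vertical line through (2α(k), 2α(k-1)); this is the key step showing that the subpath of D^{β(k)×β(k-1)} near (α(k),α(k-1)) has the same shape as D^{α(k)×α(k-1)}.) -/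
private lemma keyA (D E a a' u u' d d' i j : ℤ)
    (hD : 1 ≤ D) (hE : D + 1 ≤ E)
    (hCas : a * d' - a' * d = 1)
    (hEeq : u * d' - u' * d = E)
    (hDeq : a' * u - a * u' = D)
    (hd : d ≤ 0) (ha : 0 ≤ a)
    (hi2 : i < 2 * a)
    (h1 : u' * i < u * j) (h2 : a * j < a' * i) : False := by
  have hm1 : a * j + 1 ≤ a' * i := Int.lt_iff_add_one_le.mp h2
  have hn1 : u' * i + 1 ≤ u * j := Int.lt_iff_add_one_le.mp h1
  set x := i * d' - j * d with hx
  set m := a' * i - a * j with hm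
  set n := u * j - u' * i with hn
  have hm' : 1 ≤ m := by rw [hm]; linarith
  have hn' : 1 ≤ n := by rw [hn]; linarith
  have hi' : i = x * a - m * d := by
    rw [hx, hm]; linear_combination (-i) * hCas
  have hnx : n = x * D - m * E := by
    rw [hx, hm, hn, ← hDeq, ← hEeq]; linear_combination (u' * i - u * j) * hCas
  -- x ≥ m + 1
  have hxm : m + 1 ≤ x := by
    by_contra hcon
    push_neg at hcon
    have hxmle : x ≤ m := by linarith
    have t1 : x * D ≤ m * D := mul_le_mul_of_nonneg_right hxmle (by linarith)
    have t2 : m * D + m ≤ m * E := by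
      nlinarith [mul_le_mul_of_nonneg_left hE (show (0:ℤ) ≤ m by linarith)]
    linarith
  have t1 : (m + 1) * a ≤ x * a := mul_le_mul_of_nonneg_right hxm ha
  have t2 : 0 ≤ (m - 1) * a := mul_nonneg (by linarith) ha
  have t3 : 0 ≤ m * (-d) := mul_nonneg (by linarith) (by linarith)
  nlinarith [hi', t1, t2, t3, hi2]

private lemma dataC (b c : ℕ) (hc : 2 ≤ c) (hcb : c ≤ b)
    (α β : ℤ → ℤ)
    (hαrec : ∀ k : ℤ, α k = (rr b c (k - 1) : ℤ) * α (k - 1) - α (k - 2))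
    (hβrec : ∀ k : ℤ, β k = (rr b c (k - 1) : ℤ) * β (k - 1) - β (k - 2))
    (hα0 : α 0 = 1) (hα1 : α (-1) = 1)
    (hβ0 : β 0 = ((c : ℤ) - 1) * b + 1) (hβ1 : β (-1) = (c : ℤ) + 1) :
    ∀ k : ℤ, 1 ≤ k → ∃ d d' : ℤ,
      α k * d' - α (k - 1) * d = 1 ∧
      β k * d' - β (k - 1) * d = ((c : ℤ) - 1) * b + 1 ∧
      α (k - 1) * β k - α k * β (k - 1) = (b : ℤ) * c - b - c ∧
      d ≤ d' ∧ d' ≤ 0 ∧ 1 ≤ α (k - 1) ∧ α (k - 1) ≤ α k := by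
  have hc' : (2:ℤ) ≤ (c:ℤ) := by exact_mod_cast hc
  have hcb' : (c:ℤ) ≤ (b:ℤ) := by exact_mod_cast hcb
  intro k hk
  refine Int.le_induction (m := 1)
    (motive := fun k _ => ∃ d d' : ℤ,
      α k * d' - α (k - 1) * d = 1 ∧
      β k * d' - β (k - 1) * d = ((c : ℤ) - 1) * b + 1 ∧
      α (k - 1) * β k - α k * β (k - 1) = (b : ℤ) * c - b - c ∧
      d ≤ d' ∧ d' ≤ 0 ∧ 1 ≤ α (k - 1) ∧ α (k - 1) ≤ α k)
    ?_ (fun n hn ih => ?_) k hk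
  · have h := hαrec 1
    norm_num [rr, Int.odd_iff] at h
    have hβ' := hβrec 1
    norm_num [rr, Int.odd_iff] at hβ'
    rw [hα0, hα1] at h
    rw [hβ0, hβ1] at hβ'
    refine ⟨-1, 0, ?_, ?_, ?_, by norm_num, le_refl 0, ?_, ?_⟩ <;>
      norm_num [h, hβ', hα0, hβ0] <;> ring_nf <;> nlinarith [hc', hcb']
  · obtain ⟨d, d', h1, h2, h3, hdd, hd0, ha1, haa⟩ := ih
    have e1 : (n:ℤ) + 1 - 1 = n := by ring
    have e2 : (n:ℤ) + 1 - 2 = n - 1 := by ring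
    have hα := hαrec (n+1)
    rw [e1, e2] at hα
    have hβ := hβrec (n+1)
    rw [e1, e2] at hβ
    have hr : 2 ≤ (rr b c n : ℤ) := by
      unfold rr; split <;> push_cast <;> linarith
    set r : ℤ := (rr b c n : ℤ) with hrdef
    rw [e1]
    refine ⟨r * d - d', d, ?_, ?_, ?_, ?_, by linarith, by linarith, ?_⟩
    · rw [hα]; linear_combination h1
    · rw [hβ]; linear_combination h2
    · rw [hα, hβ]; linear_combination h3
    · nlinarith [mul_nonpos_of_nonneg_of_nonpos (show (0:ℤ) ≤ r - 2 by linarith)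
        (show d ≤ 0 by linarith)]
    · rw [hα]
      nlinarith [mul_nonneg (show (0:ℤ) ≤ r - 2 by linarith) (show (0:ℤ) ≤ α n by linarith)]

private lemma data1 (b c : ℕ) (hc1 : c = 1) (hb : 5 ≤ (b:ℤ))
    (α β : ℤ → ℤ)
    (hαrec : ∀ k : ℤ, α k = (rr b c (k - 1) : ℤ) * α (k - 1) - α (k - 2))
    (hβrec : ∀ k : ℤ, β k = (rr b c (k - 1) : ℤ) * β (k - 1) - β (k - 2))
    (hα0 : α 0 = 2) (hα1 : α (-1) = 1)
    (hβ0 : β 0 = (b : ℤ) + 2) (hβ1 : β (-1) = 3) :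
    ∀ k : ℤ, 3 ≤ k → ∃ d d' : ℤ,
      α k * d' - α (k - 1) * d = 1 ∧
      β k * d' - β (k - 1) * d = (b : ℤ) - 1 ∧
      α (k - 1) * β k - α k * β (k - 1) = (b : ℤ) - 4 ∧
      d ≤ 0 ∧ 0 ≤ α k ∧
      ((Odd k ∧ 1 ≤ α k ∧ α k ≤ α (k - 1) ∧ α (k - 1) ≤ ((b:ℤ) - 2) * α k
          ∧ 1 ≤ -d ∧ -d ≤ -d' ∧ -d' ≤ ((b:ℤ) - 2) * (-d))
       ∨ (¬ Odd k ∧ 1 ≤ α (k - 1) ∧ 2 * α (k - 1) ≤ α k ∧ α k ≤ ((b:ℤ) - 1) * α (k - 1)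
          ∧ 1 ≤ -d' ∧ 2 * (-d') ≤ -d ∧ -d ≤ ((b:ℤ) - 1) * (-d'))) := by
  have hc' : (c:ℤ) = 1 := by rw [hc1]; norm_num
  intro k hk
  refine Int.le_induction (m := 3)
    (motive := fun k _ => ∃ d d' : ℤ,
      α k * d' - α (k - 1) * d = 1 ∧
      β k * d' - β (k - 1) * d = (b : ℤ) - 1 ∧
      α (k - 1) * β k - α k * β (k - 1) = (b : ℤ) - 4 ∧
      d ≤ 0 ∧ 0 ≤ α k ∧
      ((Odd k ∧ 1 ≤ α k ∧ α k ≤ α (k - 1) ∧ α (k - 1) ≤ ((b:ℤ) - 2) * α k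
          ∧ 1 ≤ -d ∧ -d ≤ -d' ∧ -d' ≤ ((b:ℤ) - 2) * (-d))
       ∨ (¬ Odd k ∧ 1 ≤ α (k - 1) ∧ 2 * α (k - 1) ≤ α k ∧ α k ≤ ((b:ℤ) - 1) * α (k - 1)
          ∧ 1 ≤ -d' ∧ 2 * (-d') ≤ -d ∧ -d ≤ ((b:ℤ) - 1) * (-d'))))
    ?_ (fun n hn ih => ?_) k hk
  · -- base k = 3
    have h1 := hαrec 1; norm_num [rr, Int.odd_iff] at h1
    have h2 := hαrec 2; norm_num [rr, Int.odd_iff] at h2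
    have h3 := hαrec 3; norm_num [rr, Int.odd_iff] at h3
    have g1 := hβrec 1; norm_num [rr, Int.odd_iff] at g1
    have g2 := hβrec 2; norm_num [rr, Int.odd_iff] at g2
    have g3 := hβrec 3; norm_num [rr, Int.odd_iff] at g3
    rw [hα0, hα1, hc'] at h1
    have hA1 : α 1 = 1 := by rw [h1]; ring
    rw [hA1, hα0] at h2
    have hA2 : α 2 = (b:ℤ) - 2 := by rw [h2]; ring
    rw [hA2, hA1, hc'] at h3
    have hA3 : α 3 = (b:ℤ) - 3 := by rw [h3]; ring
    rw [hβ0, hβ1, hc'] at g1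
    have hB1 : β 1 = (b:ℤ) - 1 := by rw [g1]; ring
    rw [hB1, hβ0] at g2
    have hB2 : β 2 = (b:ℤ) * b - 2 * b - 2 := by rw [g2]; ring
    rw [hB2, hB1, hc'] at g3
    have hB3 : β 3 = (b:ℤ) * b - 3 * b - 1 := by rw [g3]; ring
    have e31 : (3:ℤ) - 1 = 2 := by norm_num
    refine ⟨-1, -1, ?_, ?_, ?_, by norm_num, ?_,
      Or.inl ⟨⟨1, by norm_num⟩, ?_, ?_, ?_, by norm_num, by norm_num, by nlinarith⟩⟩
    · rw [e31, hA3, hA2]; ring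
    · rw [e31, hB3, hB2]; ring
    · rw [e31, hA3, hA2, hB3, hB2]; ring
    · rw [hA3]; linarith
    · rw [hA3]; linarith
    · rw [e31, hA3, hA2]; linarith
    · rw [e31, hA3, hA2]; nlinarith
  · -- step
    obtain ⟨d, d', h1, h2, h3, hd0, ha0, hinv⟩ := ih
    have e1 : (n:ℤ) + 1 - 1 = n := by ring
    have e2 : (n:ℤ) + 1 - 2 = n - 1 := by ring
    have hα := hαrec (n+1); rw [e1, e2] at hα
    have hβ := hβrec (n+1); rw [e1, e2] at hβ
    by_cases hodd : Odd n
    · -- odd n : r = b, go to even n+1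
      have hr : (rr b c n : ℤ) = b := by simp [rr, hodd]
      rw [hr] at hα hβ
      rcases hinv with ⟨-, hq1, hqp, hpq, he1, he2, he3⟩ | ⟨hno, -⟩
      · rw [e1]
        have hnotodd : ¬ Odd ((n:ℤ)+1) := by
          simp [Int.not_odd_iff_even, Int.even_add_one, Int.not_even_iff_odd]; exact hodd
        refine ⟨(b:ℤ) * d - d', d, ?_, ?_, ?_, ?_, ?_,
          Or.inr ⟨hnotodd, hq1, ?_, ?_, by linarith, ?_, ?_⟩⟩
        · rw [hα]; linear_combination h1
        · rw [hβ]; linear_combination h2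
        · rw [hα, hβ]; linear_combination h3
        · linarith only [he1, he2, he3, hb]
        · rw [hα]; linarith only [hq1, hqp, hpq, hb]
        · rw [hα]; linarith only [hq1, hqp, hpq, hb]
        · rw [hα]; linarith only [hq1, hqp, hpq, hb]
        · linarith only [he1, he2, he3, hb]
        · linarith only [he1, he2, he3, hb]
      · exact absurd hodd hno
    · -- even n : r = 1, go to odd n+1
      have hr : (rr b c n : ℤ) = 1 := by simp [rr, hodd, hc']
      rw [hr] at hα hβ
      rcases hinv with ⟨ho, -⟩ | ⟨-, hq1, hqp, hpq, he1, he2, he3⟩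
      · exact absurd ho hodd
      · rw [e1]
        have hoddn1 : Odd ((n:ℤ)+1) := (Int.not_odd_iff_even.mp hodd).add_one
        refine ⟨d - d', d, ?_, ?_, ?_, by linarith, by linarith,
          Or.inl ⟨hoddn1, ?_, ?_, ?_, by linarith, by linarith, ?_⟩⟩
        · rw [hα]; linear_combination h1
        · rw [hβ]; linear_combination h2
        · rw [hα, hβ]; linear_combination h3
        · rw [hα]; linarith
        · rw [hα]; linarith
        · rw [hα]
          nlinarith [mul_nonneg (show (0:ℤ) ≤ (b:ℤ) - 3 by linarith)
              (show (0:ℤ) ≤ α n - 2 * α (n-1) by linarith),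
            mul_nonneg (show (0:ℤ) ≤ (b:ℤ) - 4 by linarith)
              (show (0:ℤ) ≤ α (n-1) - 1 by linarith)]
        · nlinarith [mul_nonneg (show (0:ℤ) ≤ (b:ℤ) - 3 by linarith)
              (show (0:ℤ) ≤ -d - 2 * (-d') by linarith),
            mul_nonneg (show (0:ℤ) ≤ (b:ℤ) - 4 by linarith)
              (show (0:ℤ) ≤ -d' - 1 by linarith)]

/-- With `b ≥ c ≥ 1`, `bc > 4` and the sequences `α, β` as
defined, for `k ≥ 1` if `c > 1` and `k ≥ 2` if `c = 1`, there is no lattice point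
`(i,j)` with `0 < i < 2α(k)`, `β(k-1)·i < β(k)·j` and `α(k)·j < α(k-1)·i`. -/
theorem statement19 (b c : ℕ) (hc : 1 ≤ c) (hcb : c ≤ b) (hbc : 4 < b * c)
    (α β γ : ℤ → ℤ)
    (hαrec : ∀ k : ℤ, α k = (rr b c (k - 1) : ℤ) * α (k - 1) - α (k - 2))
    (hβrec : ∀ k : ℤ, β k = (rr b c (k - 1) : ℤ) * β (k - 1) - β (k - 2))
    (hγrec : ∀ k : ℤ, γ k = (rr b c (k - 1) : ℤ) * γ (k - 1) - γ (k - 2))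
    (hα0 : α 0 = if 1 < c then 1 else 2)
    (hα1 : α (-1) = 1)
    (hβ0 : β 0 = if 1 < c then ((c : ℤ) - 1) * b + 1 else (b : ℤ) + 2)
    (hβ1 : β (-1) = if 1 < c then (c : ℤ) + 1 else 3)
    (hγ0 : γ 0 = if 1 < c then (b : ℤ) + 1 else (b : ℤ) + 2)
    (hγ1 : γ (-1) = if 1 < c then ((b : ℤ) - 1) * c + 1 else (b : ℤ) - 1)
    (k : ℤ) (hk : (1 < c ∧ 1 ≤ k) ∨ (c = 1 ∧ 2 ≤ k)) :
    ¬ ∃ i j : ℤ, 0 < i ∧ i < 2 * α k ∧ β (k - 1) * i < β k * j ∧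
        α k * j < α (k - 1) * i := by
  rintro ⟨i, j, hi0, hi2, hij1, hij2⟩
  rcases hk with ⟨hc2, hk1⟩ | ⟨hc1, hk2⟩
  · -- case c > 1
    rw [if_pos hc2] at hα0 hβ0 hβ1
    have hc' : (2:ℤ) ≤ (c:ℤ) := by exact_mod_cast hc2
    have hcb' : (c:ℤ) ≤ (b:ℤ) := by exact_mod_cast hcb
    have hbc' : (4:ℤ) < (b:ℤ) * (c:ℤ) := by exact_mod_cast hbc
    have hb3 : (3:ℤ) ≤ (b:ℤ) := by
      by_contra h
      push_neg at h
      nlinarith [mul_nonneg (show (0:ℤ) ≤ 2 - (b:ℤ) by linarith)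
        (show (0:ℤ) ≤ (c:ℤ) by linarith)]
    have hD : (1:ℤ) ≤ (b:ℤ) * c - b - c := by
      nlinarith [mul_nonneg (show (0:ℤ) ≤ (b:ℤ) - 3 by linarith)
        (show (0:ℤ) ≤ (c:ℤ) - 2 by linarith)]
    obtain ⟨d, d', h1, h2, h3, hdd, hd0, ha1, haa⟩ :=
      dataC b c hc2 hcb α β hαrec hβrec hα0 hα1 hβ0 hβ1 k hk1
    exact keyA ((b:ℤ) * c - b - c) (((c:ℤ) - 1) * b + 1) (α k) (α (k-1)) (β k) (β (k-1)) d d' i j hD (by linarith) h1 h2 h3 (by linarith) (by linarith) hi2 hij1 hij2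
  · -- case c = 1
    have hnc : ¬ 1 < c := by omega
    rw [if_neg hnc] at hα0 hβ0 hβ1
    have hb5n : 5 ≤ b := by subst hc1; simp at hbc; omega
    have hb5 : (5:ℤ) ≤ (b:ℤ) := by exact_mod_cast hb5n
    rcases eq_or_lt_of_le hk2 with hk2' | hk3
    · -- k = 2
      subst hk2'
      have h1 := hαrec 1; norm_num [rr, Int.odd_iff] at h1
      have h2 := hαrec 2; norm_num [rr, Int.odd_iff] at h2
      have g1 := hβrec 1; norm_num [rr, Int.odd_iff] at g1
      have g2 := hβrec 2; norm_num [rr, Int.odd_iff] at g2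
      have hcz : (c:ℤ) = 1 := by rw [hc1]; norm_num
      rw [hα0, hα1, hcz] at h1
      have hA1 : α 1 = 1 := by rw [h1]; ring
      rw [hA1, hα0] at h2
      have hA2 : α 2 = (b:ℤ) - 2 := by rw [h2]; ring
      rw [hβ0, hβ1, hcz] at g1
      have hB1 : β 1 = (b:ℤ) - 1 := by rw [g1]; ring
      rw [hB1, hβ0] at g2
      have hB2 : β 2 = (b:ℤ) * b - 2 * b - 2 := by rw [g2]; ring
      have e21 : (2:ℤ) - 1 = 1 := by norm_num
      rw [e21] at hij1 hij2
      refine keyA ((b:ℤ) - 4) ((b:ℤ) - 1) (α 2) (α 1) (β 2) (β 1) (-1) 0 i j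
        (by linarith) (by linarith) ?_ ?_ ?_ (by norm_num) ?_ hi2 hij1 hij2
      · rw [hA1]; ring
      · rw [hB1]; ring
      · rw [hA1, hA2, hB1, hB2]; ring
      · rw [hA2]; linarith
    · -- k ≥ 3
      have hk3' : 3 ≤ k := hk3
      obtain ⟨d, d', h1, h2, h3, hd0, ha0, -⟩ :=
        data1 b c hc1 hb5 α β hαrec hβrec hα0 hα1 hβ0 hβ1 k hk3'
      exact keyA ((b:ℤ) - 4) ((b:ℤ) - 1) (α k) (α (k-1)) (β k) (β (k-1)) d d' i j
        (by linarith) (by linarith) h1 h2 h3 hd0 ha0 hi2 hij1 hij2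
end
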